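/- arXiv:2101.03250 — 9 statements merged into one kernel-verified Lean document; each statement's English description precedes it below -/
import Mathlib

section
/- Let x₀ ∈ ℝ, K > 0, and let σ : [0,∞) × ℝ → ℝ be continuous with v ≤ σ(t,y) ≤ V for all t ≥ 0, y ∈ ℝ, where 0 < v < V. Suppose that for each y ∈ ℝ the map t ↦ σ(t,y) is differentiable with derivative ∂₁σ(t,y), that ∂₁σ is continuous on [0,∞) × ℝ, and that |∂₁σ(t,y)| ≤ K σ(t,y)² for all t, y. Define h(t,x) := ∫_{x₀}^x (1/σ(t,y)) dy. Then for all s₁, s₂ ≥ 0 and x₁, x₂ ∈ ℝ: |h(s₁,x₁) − h(s₂,x₂)| ≤ (1/v)|x₁ − x₂| + K|x₂ − x₀||s₁ − s₂|. -/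
/-- Lemma A.1(ii): joint Lipschitz-type bound for the Lamperti kernel
`h(t,x) = ∫_{x₀}^x (1/σ(t,y)) dy` when `|∂₁σ| ≤ K σ²`. -/
theorem lamperti_kernel_joint_lipschitz
    (x₀ v V K : ℝ) (hv : 0 < v) (hvV : v < V) (hK : 0 < K)
    (σ D : ℝ → ℝ → ℝ)
    (hσcont : ContinuousOn (fun p : ℝ × ℝ => σ p.1 p.2) (Set.Ici 0 ×ˢ Set.univ))
    (hlb : ∀ t, 0 ≤ t → ∀ y, v ≤ σ t y)
    (hub : ∀ t, 0 ≤ t → ∀ y, σ t y ≤ V)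
    (hderiv : ∀ y : ℝ, ∀ t, 0 ≤ t →
      HasDerivWithinAt (fun s => σ s y) (D t y) (Set.Ici 0) t)
    (hDcont : ContinuousOn (fun p : ℝ × ℝ => D p.1 p.2) (Set.Ici 0 ×ˢ Set.univ))
    (hDbound : ∀ t, 0 ≤ t → ∀ y, |D t y| ≤ K * (σ t y) ^ 2)
    (h : ℝ → ℝ → ℝ)
    (hdef : ∀ t x, h t x = ∫ y in x₀..x, (σ t y)⁻¹) :
    ∀ s₁, 0 ≤ s₁ → ∀ s₂, 0 ≤ s₂ → ∀ x₁ x₂ : ℝ,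
      |h s₁ x₁ - h s₂ x₂| ≤ (1 / v) * |x₁ - x₂| + K * |x₂ - x₀| * |s₁ - s₂| := by
  intro s₁ hs₁ s₂ hs₂ x₁ x₂
  -- continuity of y ↦ σ t y for fixed t ≥ 0
  have hcont : ∀ t, 0 ≤ t → Continuous (fun y => σ t y) := by
    intro t ht
    have : ContinuousOn (fun y : ℝ => σ t y) Set.univ := by
      have hmap : Continuous (fun y : ℝ => ((t, y) : ℝ × ℝ)) :=
        (continuous_const.prodMk continuous_id)
      exact hσcont.comp hmap.continuousOn (fun y _ => ⟨ht, trivial⟩)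
    exact continuousOn_univ.mp this
  have hne : ∀ t, 0 ≤ t → ∀ y, σ t y ≠ 0 := fun t ht y =>
    ne_of_gt (lt_of_lt_of_le hv (hlb t ht y))
  have hcontinv : ∀ t, 0 ≤ t → Continuous (fun y => (σ t y)⁻¹) := fun t ht =>
    (hcont t ht).inv₀ (hne t ht)
  have hint : ∀ t, 0 ≤ t → ∀ a b : ℝ,
      IntervalIntegrable (fun y => (σ t y)⁻¹) MeasureTheory.volume a b :=
    fun t ht a b => ((hcontinv t ht)).intervalIntegrable a b
  -- pointwise Lipschitz in t of (σ t y)⁻¹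
  have hLip : ∀ y, |(σ s₁ y)⁻¹ - (σ s₂ y)⁻¹| ≤ K * |s₁ - s₂| := by
    intro y
    have hd : ∀ t ∈ Set.Ici (0:ℝ),
        HasDerivWithinAt (fun s => (σ s y)⁻¹) (-D t y / (σ t y) ^ 2) (Set.Ici 0) t := by
      intro t ht
      exact (hderiv y t ht).inv (hne t ht y)
    have hb : ∀ t ∈ Set.Ici (0:ℝ), ‖-D t y / (σ t y) ^ 2‖ ≤ K := by
      intro t ht
      have hσpos : 0 < (σ t y) ^ 2 := pow_pos (lt_of_lt_of_le hv (hlb t ht y)) 2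
      rw [Real.norm_eq_abs, abs_div, abs_neg, abs_of_pos hσpos]
      rw [div_le_iff₀ hσpos]
      exact hDbound t ht y
    have := (convex_Ici (0:ℝ)).norm_image_sub_le_of_norm_hasDerivWithin_le hd hb hs₂ hs₁
    simpa [Real.norm_eq_abs] using this
  -- split
  have hsplit : |h s₁ x₁ - h s₂ x₂| ≤ |h s₁ x₁ - h s₁ x₂| + |h s₁ x₂ - h s₂ x₂| := by
    have := abs_sub_le (h s₁ x₁) (h s₁ x₂) (h s₂ x₂)
    linarith
  have h1 : |h s₁ x₁ - h s₁ x₂| ≤ (1 / v) * |x₁ - x₂| := by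
    rw [hdef, hdef]
    rw [intervalIntegral.integral_interval_sub_left (hint s₁ hs₁ x₀ x₁) (hint s₁ hs₁ x₀ x₂)]
    have hb : ∀ y ∈ Set.uIoc x₂ x₁, ‖(σ s₁ y)⁻¹‖ ≤ 1 / v := by
      intro y _
      rw [Real.norm_eq_abs,
        abs_of_pos (inv_pos.mpr (lt_of_lt_of_le hv (hlb s₁ hs₁ y))), one_div]
      exact inv_anti₀ hv (hlb s₁ hs₁ y)
    have := intervalIntegral.norm_integral_le_of_norm_le_const
      (C := 1/v) (f := fun y => (σ s₁ y)⁻¹) (a := x₂) (b := x₁) hb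
    rw [Real.norm_eq_abs] at this
    exact this
  have h2 : |h s₁ x₂ - h s₂ x₂| ≤ K * |s₁ - s₂| * |x₂ - x₀| := by
    rw [hdef, hdef, ← intervalIntegral.integral_sub (hint s₁ hs₁ x₀ x₂) (hint s₂ hs₂ x₀ x₂)]
    have := intervalIntegral.norm_integral_le_of_norm_le_const
      (C := K * |s₁ - s₂|) (f := fun y => (σ s₁ y)⁻¹ - (σ s₂ y)⁻¹) (a := x₀) (b := x₂)
      (fun y _ => by rw [Real.norm_eq_abs]; exact hLip y)
    rw [Real.norm_eq_abs] at this
    exact this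
  calc |h s₁ x₁ - h s₂ x₂| ≤ |h s₁ x₁ - h s₁ x₂| + |h s₁ x₂ - h s₂ x₂| := hsplit
    _ ≤ (1 / v) * |x₁ - x₂| + K * |s₁ - s₂| * |x₂ - x₀| := add_le_add h1 h2
    _ = (1 / v) * |x₁ - x₂| + K * |x₂ - x₀| * |s₁ - s₂| := by ring
end

section
/- Let x₀ ∈ ℝ and let σ : [0,∞) × ℝ → ℝ be such that σ(t,·) is continuous for each t ≥ 0 and v ≤ σ(t,y) ≤ V for all t ≥ 0, y ∈ ℝ, where 0 < v < V. Define h(t,x) := ∫_{x₀}^x (1/σ(t,y)) dy and let ρ(t,·) be the inverse of the bijection h(t,·). Let 0 ≤ t₁ ≤ t₂, y₂ ≥ 0 and G > 0 be such that |σ(s,x) − σ(s',x')| ≤ G(|s − s'| + |x − x'|) for all s, s' ∈ [t₁,t₂] and all x, x' ∈ [x₀ − V y₂, x₀ + V y₂]. Then for all s₁, s₂ ∈ [t₁,t₂] and all y ∈ [0, y₂]: |ρ(s₁,y) − ρ(s₂,y)| ≤ G y e^{G y} |s₁ − s₂|. -/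
/-- Bi-Lipschitz (lower) estimate for the Lamperti transform kernel at fixed time. -/
private lemma lamperti_bilip (x₀ : ℝ) {v V : ℝ} (hv : 0 < v) (hV : 0 < V)
    (f : ℝ → ℝ) (hfc : Continuous f) (hlb : ∀ y, v ≤ f y) (hub : ∀ y, f y ≤ V)
    (a b : ℝ) :
    |a - b| ≤ V * |(∫ z in x₀..a, (f z)⁻¹) - ∫ z in x₀..b, (f z)⁻¹| := by
  have hpos : ∀ z, 0 < f z := fun z => hv.trans_le (hlb z)
  have hinv : Continuous fun z => (f z)⁻¹ := hfc.inv₀ fun z => (hpos z).ne'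
  have hint : ∀ a b : ℝ, IntervalIntegrable (fun z => (f z)⁻¹) MeasureTheory.volume a b :=
    fun a b => hinv.intervalIntegrable a b
  suffices key : ∀ a b : ℝ, b ≤ a →
      a - b ≤ V * ((∫ z in x₀..a, (f z)⁻¹) - ∫ z in x₀..b, (f z)⁻¹) ∧
      (0:ℝ) ≤ (∫ z in x₀..a, (f z)⁻¹) - ∫ z in x₀..b, (f z)⁻¹ by
    rcases le_total b a with hab | hab
    · obtain ⟨h1, h2⟩ := key a b hab
      rw [abs_of_nonneg (sub_nonneg.mpr hab), abs_of_nonneg h2]; exact h1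
    · obtain ⟨h1, h2⟩ := key b a hab
      rw [abs_sub_comm, abs_sub_comm (∫ z in x₀..a, (f z)⁻¹)]
      rw [abs_of_nonneg (sub_nonneg.mpr hab), abs_of_nonneg h2]; exact h1
  intro a b hab
  have hdiff : (∫ z in x₀..a, (f z)⁻¹) - ∫ z in x₀..b, (f z)⁻¹ = ∫ z in b..a, (f z)⁻¹ := by
    rw [← intervalIntegral.integral_add_adjacent_intervals (hint x₀ b) (hint b a)]; ring
  have hlow : (a - b) * V⁻¹ ≤ ∫ z in b..a, (f z)⁻¹ := by
    have hmono : ∫ z in b..a, (V⁻¹ : ℝ) ≤ ∫ z in b..a, (f z)⁻¹ :=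
      intervalIntegral.integral_mono_on hab intervalIntegrable_const (hint b a)
        (fun z _ => inv_anti₀ (hpos z) (hub z))
    simpa [intervalIntegral.integral_const, smul_eq_mul, mul_comm] using hmono
  have hnn : (0:ℝ) ≤ (a - b) * V⁻¹ := mul_nonneg (sub_nonneg.mpr hab) (inv_nonneg.mpr hV.le)
  constructor
  · rw [hdiff]
    calc a - b = V * ((a - b) * V⁻¹) := by field_simp
      _ ≤ V * ∫ z in b..a, (f z)⁻¹ := mul_le_mul_of_nonneg_left hlow hV.le
  · rw [hdiff]; linarith

private lemma exp_sub_one_le_mul_exp {x : ℝ} (hx : 0 ≤ x) :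
    Real.exp x - 1 ≤ x * Real.exp x := by
  have h1 : 1 - x ≤ Real.exp (-x) := by linarith [Real.add_one_le_exp (-x)]
  have h2 : Real.exp (-x) * Real.exp x = 1 := by rw [← Real.exp_add]; simp
  nlinarith [Real.exp_pos x, mul_le_mul_of_nonneg_right h1 (Real.exp_pos x).le]

/-- Lemma A.1(iii): time-regularity of the inverse Lamperti kernel,
via Gronwall's inequality. -/
theorem inverse_lamperti_kernel_time_lipschitz
    (x₀ v V G t₁ t₂ y₂ : ℝ) (hv : 0 < v) (hvV : v < V) (hG : 0 < G)
    (ht₁ : 0 ≤ t₁) (ht : t₁ ≤ t₂) (hy₂ : 0 ≤ y₂)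
    (σ : ℝ → ℝ → ℝ)
    (hσcont : ∀ t, 0 ≤ t → Continuous (σ t))
    (hlb : ∀ t, 0 ≤ t → ∀ y, v ≤ σ t y)
    (hub : ∀ t, 0 ≤ t → ∀ y, σ t y ≤ V)
    (h ρ : ℝ → ℝ → ℝ)
    (hdef : ∀ t x, h t x = ∫ y in x₀..x, (σ t y)⁻¹)
    (hρ : ∀ t, 0 ≤ t → ∀ y, h t (ρ t y) = y)
    (hσLip : ∀ s ∈ Set.Icc t₁ t₂, ∀ s' ∈ Set.Icc t₁ t₂,
      ∀ x ∈ Set.Icc (x₀ - V * y₂) (x₀ + V * y₂),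
      ∀ x' ∈ Set.Icc (x₀ - V * y₂) (x₀ + V * y₂),
        |σ s x - σ s' x'| ≤ G * (|s - s'| + |x - x'|)) :
    ∀ s₁ ∈ Set.Icc t₁ t₂, ∀ s₂ ∈ Set.Icc t₁ t₂, ∀ y ∈ Set.Icc (0:ℝ) y₂,
      |ρ s₁ y - ρ s₂ y| ≤ G * y * Real.exp (G * y) * |s₁ - s₂| := by
  have hV : 0 < V := hv.trans hvV
  -- bi-Lipschitz lower bound for h t
  have hbil : ∀ t, 0 ≤ t → ∀ a b : ℝ, |a - b| ≤ V * |h t a - h t b| := by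
    intro t ht' a b
    rw [hdef t a, hdef t b]
    exact lamperti_bilip x₀ hv hV (σ t) (hσcont t ht') (hlb t ht') (hub t ht') a b
  -- ρ t 0 = x₀
  have hρx₀ : ∀ t, 0 ≤ t → ρ t 0 = x₀ := by
    intro t ht'
    have h0 : h t x₀ = 0 := by rw [hdef]; exact intervalIntegral.integral_same
    have h1 := hbil t ht' (ρ t 0) x₀
    rw [hρ t ht' 0, h0] at h1
    have h2 : |ρ t 0 - x₀| ≤ 0 := by simpa using h1
    have h3 := abs_eq_zero.mp (le_antisymm h2 (abs_nonneg _))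
    linarith
  -- ρ t is V-Lipschitz
  have hρLip : ∀ t, 0 ≤ t → ∀ a b : ℝ, |ρ t a - ρ t b| ≤ V * |a - b| := by
    intro t ht' a b
    have h1 := hbil t ht' (ρ t a) (ρ t b)
    rwa [hρ t ht' a, hρ t ht' b] at h1
  have hρcont : ∀ t, 0 ≤ t → Continuous (ρ t) := by
    intro t ht'
    apply (LipschitzWith.of_dist_le_mul (K := ⟨V, hV.le⟩) fun a b => ?_).continuous
    rw [Real.dist_eq, Real.dist_eq]; exact hρLip t ht' a b
  -- range of ρ
  have hρrange : ∀ t, 0 ≤ t → ∀ z ∈ Set.Icc (0:ℝ) y₂,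
      ρ t z ∈ Set.Icc (x₀ - V * y₂) (x₀ + V * y₂) := by
    intro t ht' z hz
    have h1 := hρLip t ht' z 0
    rw [hρx₀ t ht'] at h1
    have h2 : |z - 0| = z := by rw [sub_zero, abs_of_nonneg hz.1]
    rw [h2] at h1
    have h3 : V * z ≤ V * y₂ := mul_le_mul_of_nonneg_left hz.2 hV.le
    have h4 := abs_le.mp (h1.trans h3)
    exact ⟨by linarith [h4.1], by linarith [h4.2]⟩
  -- derivative of ρ t
  have hderivρ : ∀ t, 0 ≤ t → ∀ z : ℝ, HasDerivAt (ρ t) (σ t (ρ t z)) z := by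
    intro t ht' z
    have hσpos : 0 < σ t (ρ t z) := hv.trans_le (hlb t ht' _)
    have hinvc : Continuous fun w => (σ t w)⁻¹ :=
      (hσcont t ht').inv₀ fun w => (hv.trans_le (hlb t ht' w)).ne'
    have hH : HasDerivAt (h t) (σ t (ρ t z))⁻¹ (ρ t z) := by
      have hd : HasDerivAt (fun x => ∫ w in x₀..x, (σ t w)⁻¹) (σ t (ρ t z))⁻¹ (ρ t z) :=
        intervalIntegral.integral_hasDerivAt_right (hinvc.intervalIntegrable _ _)
          hinvc.aestronglyMeasurable.stronglyMeasurableAtFilter hinvc.continuousAt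
      have he : h t = fun x => ∫ w in x₀..x, (σ t w)⁻¹ := funext (hdef t)
      rw [he]; exact hd
    have hr := HasDerivAt.of_local_left_inverse ((hρcont t ht').continuousAt) hH
      (inv_ne_zero hσpos.ne') (Filter.Eventually.of_forall (hρ t ht'))
    rwa [inv_inv] at hr
  intro s₁ hs₁ s₂ hs₂ y hy
  have hs₁0 : 0 ≤ s₁ := ht₁.trans hs₁.1
  have hs₂0 : 0 ≤ s₂ := ht₁.trans hs₂.1
  have hgd : ∀ z, HasDerivAt (fun w => ρ s₁ w - ρ s₂ w)
      (σ s₁ (ρ s₁ z) - σ s₂ (ρ s₂ z)) z :=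
    fun z => (hderivρ s₁ hs₁0 z).sub (hderivρ s₂ hs₂0 z)
  have grw := norm_le_gronwallBound_of_norm_deriv_right_le
    (f := fun w => ρ s₁ w - ρ s₂ w)
    (f' := fun z => σ s₁ (ρ s₁ z) - σ s₂ (ρ s₂ z))
    (δ := 0) (K := G) (ε := G * |s₁ - s₂|) (a := 0) (b := y)
    (((hρcont s₁ hs₁0).sub (hρcont s₂ hs₂0)).continuousOn)
    (fun z _ => (hgd z).hasDerivWithinAt)
    (by show ‖ρ s₁ 0 - ρ s₂ 0‖ ≤ 0; rw [hρx₀ s₁ hs₁0, hρx₀ s₂ hs₂0]; simp)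
    (by
      intro z hz
      have hz2 : z ∈ Set.Icc (0:ℝ) y₂ := ⟨hz.1, hz.2.le.trans hy.2⟩
      have h1 := hσLip s₁ hs₁ s₂ hs₂ (ρ s₁ z) (hρrange s₁ hs₁0 z hz2)
        (ρ s₂ z) (hρrange s₂ hs₂0 z hz2)
      simp only [Real.norm_eq_abs]
      calc |σ s₁ (ρ s₁ z) - σ s₂ (ρ s₂ z)| ≤ G * (|s₁ - s₂| + |ρ s₁ z - ρ s₂ z|) := h1
        _ = G * |ρ s₁ z - ρ s₂ z| + G * |s₁ - s₂| := by ring)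
    y ⟨hy.1, le_refl y⟩
  rw [gronwallBound_of_K_ne_0 hG.ne'] at grw
  simp only [Real.norm_eq_abs, sub_zero, zero_mul, zero_add] at grw
  have hdiv : G * |s₁ - s₂| / G = |s₁ - s₂| := by field_simp
  rw [hdiv] at grw
  have hGy : 0 ≤ G * y := mul_nonneg hG.le hy.1
  have hexp : Real.exp (G * y) - 1 ≤ (G * y) * Real.exp (G * y) :=
    exp_sub_one_le_mul_exp hGy
  have hmul := mul_le_mul_of_nonneg_left hexp (abs_nonneg (s₁ - s₂))
  calc |ρ s₁ y - ρ s₂ y| ≤ |s₁ - s₂| * (Real.exp (G * y) - 1) := grw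
    _ ≤ |s₁ - s₂| * ((G * y) * Real.exp (G * y)) := hmul
    _ = G * y * Real.exp (G * y) * |s₁ - s₂| := by ring
end

section
/- Let x₀ ∈ ℝ, K > 0, and let μ, σ : [0,∞) × ℝ → ℝ with σ continuous, v ≤ σ(t,y) ≤ V for all t, y where 0 < v < V. Suppose for each y the map t ↦ σ(t,y) is differentiable with continuous derivative ∂₁σ(t,y) satisfying |∂₁σ(t,y)| ≤ Kσ(t,y)², and for each t the map x ↦ σ(t,x) is differentiable with derivative ∂₂σ(t,x). Define h(t,x) := ∫_{x₀}^x (1/σ(t,y)) dy, let ρ(t,·) be the inverse of h(t,·), let g(t,x) := ∫_{x₀}^x ∂₁σ(t,y)/σ(t,y)² dy, and define μ*(t,ℓ) := −g(t, ρ(t,ℓ)) + μ(t, ρ(t,ℓ))/σ(t, ρ(t,ℓ)) − (1/2)∂₂σ(t, ρ(t,ℓ)). If there exist M₁, M₂ > 0 with |μ(t,x₁)/σ(t,x₁) − μ(t,x₂)/σ(t,x₂)| ≤ M₁|x₁ − x₂| and |∂₂σ(t,x₁) − ∂₂σ(t,x₂)| ≤ M₂|x₁ − x₂| for all t ≥ 0,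 x₁, x₂ ∈ ℝ, then μ* is Lipschitz continuous in its second entry; in fact |μ*(t,ℓ₁) − μ*(t,ℓ₂)| ≤ (K + M₁ + M₂/2)·V·|ℓ₁ − ℓ₂| for all t ≥ 0, ℓ₁, ℓ₂ ∈ ℝ. -/
/-- Lemma 3.6, quantitative: if `μ/σ` and `∂₂σ` are Lipschitz in the
second entry, then the transformed drift
`μ*(t,ℓ) = −g(t,ρ(t,ℓ)) + (μ/σ)(t,ρ(t,ℓ)) − (1/2)∂₂σ(t,ρ(t,ℓ))`
is Lipschitz in its second entry with constant `(K + M₁ + M₂/2)·V`.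
Here `D₁ = ∂₁σ`, `D₂ = ∂₂σ`, `h(t,x) = ∫_{x₀}^x dy/σ(t,y)`, `ρ(t,·) = h(t,·)⁻¹`,
and `g(t,x) = ∫_{x₀}^x ∂₁σ(t,y)/σ(t,y)² dy`. -/
theorem transformed_drift_lipschitz_second_entry
    (x₀ v V K M₁ M₂ : ℝ) (hv : 0 < v) (hvV : v < V) (hK : 0 < K)
    (hM₁ : 0 < M₁) (hM₂ : 0 < M₂)
    (μ σ D₁ D₂ : ℝ → ℝ → ℝ)
    (hσcont : ContinuousOn (fun p : ℝ × ℝ => σ p.1 p.2) (Set.Ici 0 ×ˢ Set.univ))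
    (hlb : ∀ t, 0 ≤ t → ∀ y, v ≤ σ t y)
    (hub : ∀ t, 0 ≤ t → ∀ y, σ t y ≤ V)
    (hD₁ : ∀ y : ℝ, ∀ t, 0 ≤ t →
      HasDerivWithinAt (fun s => σ s y) (D₁ t y) (Set.Ici 0) t)
    (hD₁cont : ContinuousOn (fun p : ℝ × ℝ => D₁ p.1 p.2) (Set.Ici 0 ×ˢ Set.univ))
    (hD₁bound : ∀ t, 0 ≤ t → ∀ y, |D₁ t y| ≤ K * (σ t y) ^ 2)
    (hD₂ : ∀ t, 0 ≤ t → ∀ x : ℝ, HasDerivAt (σ t) (D₂ t x) x)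
    (h ρ g : ℝ → ℝ → ℝ)
    (hdef : ∀ t x, h t x = ∫ y in x₀..x, (σ t y)⁻¹)
    (hρ : ∀ t, 0 ≤ t → ∀ y, h t (ρ t y) = y)
    (hgdef : ∀ t x, g t x = ∫ y in x₀..x, D₁ t y / (σ t y) ^ 2)
    (μs : ℝ → ℝ → ℝ)
    (hμs : ∀ t ℓ, μs t ℓ =
      -(g t (ρ t ℓ)) + μ t (ρ t ℓ) / σ t (ρ t ℓ) - (1 / 2) * D₂ t (ρ t ℓ))
    (hquotLip : ∀ t, 0 ≤ t → ∀ x₁ x₂ : ℝ,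
      |μ t x₁ / σ t x₁ - μ t x₂ / σ t x₂| ≤ M₁ * |x₁ - x₂|)
    (hD₂Lip : ∀ t, 0 ≤ t → ∀ x₁ x₂ : ℝ,
      |D₂ t x₁ - D₂ t x₂| ≤ M₂ * |x₁ - x₂|) :
    ∀ t, 0 ≤ t → ∀ ℓ₁ ℓ₂ : ℝ,
      |μs t ℓ₁ - μs t ℓ₂| ≤ (K + M₁ + M₂ / 2) * V * |ℓ₁ - ℓ₂| := by

  intro t ht ℓ₁ ℓ₂
  have hVpos : (0:ℝ) < V := hv.trans hvV
  have hmem : ∀ y : ℝ, ((t, y) : ℝ × ℝ) ∈ Set.Ici (0:ℝ) ×ˢ (Set.univ : Set ℝ) :=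
    fun y => ⟨ht, trivial⟩
  have hσtc : Continuous fun y => σ t y := by
    rw [← continuousOn_univ]
    exact hσcont.comp ((Continuous.prodMk_right t).continuousOn) (fun y _ => hmem y)
  have hD₁tc : Continuous fun y => D₁ t y := by
    rw [← continuousOn_univ]
    exact hD₁cont.comp ((Continuous.prodMk_right t).continuousOn) (fun y _ => hmem y)
  have hσpos : ∀ y, 0 < σ t y := fun y => lt_of_lt_of_le hv (hlb t ht y)
  have hinvc : Continuous fun y => (σ t y)⁻¹ := hσtc.inv₀ (fun y => (hσpos y).ne')
  have hratc : Continuous fun y => D₁ t y / (σ t y) ^ 2 :=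
    hD₁tc.div (hσtc.pow 2) (fun y => pow_ne_zero 2 (hσpos y).ne')
  have hint : ∀ a b : ℝ,
      IntervalIntegrable (fun y => (σ t y)⁻¹) MeasureTheory.volume a b :=
    fun a b => hinvc.intervalIntegrable a b
  have hintg : ∀ a b : ℝ,
      IntervalIntegrable (fun y => D₁ t y / (σ t y) ^ 2) MeasureTheory.volume a b :=
    fun a b => hratc.intervalIntegrable a b
  -- lower bound on h differences
  have key : ∀ a b : ℝ, b ≤ a → (a - b) / V ≤ h t a - h t b := by
    intro a b hba
    rw [hdef, hdef,
      intervalIntegral.integral_interval_sub_left (hint x₀ a) (hint x₀ b)]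
    have hc : (a - b) / V = ∫ _y in b..a, (V:ℝ)⁻¹ := by
      rw [intervalIntegral.integral_const]
      simp [div_eq_mul_inv, smul_eq_mul]
    rw [hc]
    refine intervalIntegral.integral_mono_on hba intervalIntegrable_const (hint b a) ?_
    intro y _
    exact inv_anti₀ (hσpos y) (hub t ht y)
  have hlow : ∀ a b : ℝ, |a - b| / V ≤ |h t a - h t b| := by
    intro a b
    rcases le_total b a with hba | hab
    · have e : |a - b| / V = (a - b) / V := by rw [abs_of_nonneg (sub_nonneg.2 hba)]
      rw [e]
      exact le_trans (key a b hba) (le_abs_self _)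
    · have e : |a - b| / V = (b - a) / V := by
        rw [abs_sub_comm, abs_of_nonneg (sub_nonneg.2 hab)]
      rw [e, abs_sub_comm]
      exact le_trans (key b a hab) (le_abs_self _)
  have hρlip : |ρ t ℓ₁ - ρ t ℓ₂| ≤ V * |ℓ₁ - ℓ₂| := by
    have h1 := hlow (ρ t ℓ₁) (ρ t ℓ₂)
    rw [hρ t ht ℓ₁, hρ t ht ℓ₂, div_le_iff₀ hVpos] at h1
    nlinarith [abs_nonneg (ℓ₁ - ℓ₂)]
  have hglip : ∀ a b : ℝ, |g t a - g t b| ≤ K * |a - b| := by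
    intro a b
    rw [hgdef, hgdef,
      intervalIntegral.integral_interval_sub_left (hintg x₀ a) (hintg x₀ b)]
    have hb : ∀ y ∈ Set.uIoc b a, ‖D₁ t y / (σ t y) ^ 2‖ ≤ K := by
      intro y _
      rw [Real.norm_eq_abs, abs_div, abs_pow, sq_abs,
        div_le_iff₀ (pow_pos (hσpos y) 2)]
      have := hD₁bound t ht y
      linarith
    have := intervalIntegral.norm_integral_le_of_norm_le_const hb
    rwa [Real.norm_eq_abs] at this
  set c₁ := ρ t ℓ₁ with hc₁
  set c₂ := ρ t ℓ₂ with hc₂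
  have e1 := hglip c₁ c₂
  have e2 := hquotLip t ht c₁ c₂
  have e3 := hD₂Lip t ht c₁ c₂
  rw [hμs, hμs]
  have hre : (-(g t c₁) + μ t c₁ / σ t c₁ - 1 / 2 * D₂ t c₁) -
      (-(g t c₂) + μ t c₂ / σ t c₂ - 1 / 2 * D₂ t c₂)
      = (g t c₂ - g t c₁) + (μ t c₁ / σ t c₁ - μ t c₂ / σ t c₂) +
        (1 / 2 * D₂ t c₂ - 1 / 2 * D₂ t c₁) := by ring
  rw [hre]
  have htri := abs_add_three (g t c₂ - g t c₁)
    (μ t c₁ / σ t c₁ - μ t c₂ / σ t c₂) (1 / 2 * D₂ t c₂ - 1 / 2 * D₂ t c₁)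
  have h4 : |g t c₂ - g t c₁| = |g t c₁ - g t c₂| := abs_sub_comm _ _
  have h5 : |1 / 2 * D₂ t c₂ - 1 / 2 * D₂ t c₁| = 1 / 2 * |D₂ t c₁ - D₂ t c₂| := by
    rw [abs_sub_comm]
    rw [show 1 / 2 * D₂ t c₁ - 1 / 2 * D₂ t c₂ = 1/2 * (D₂ t c₁ - D₂ t c₂) by ring,
      abs_mul]
    norm_num
  have hmul : (K + M₁ + M₂ / 2) * |c₁ - c₂| ≤ (K + M₁ + M₂ / 2) * (V * |ℓ₁ - ℓ₂|) :=
    mul_le_mul_of_nonneg_left hρlip (by linarith)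
  calc |(g t c₂ - g t c₁) + (μ t c₁ / σ t c₁ - μ t c₂ / σ t c₂) +
        (1 / 2 * D₂ t c₂ - 1 / 2 * D₂ t c₁)|
      ≤ |g t c₂ - g t c₁| + |μ t c₁ / σ t c₁ - μ t c₂ / σ t c₂| +
        |1 / 2 * D₂ t c₂ - 1 / 2 * D₂ t c₁| := htri
    _ ≤ K * |c₁ - c₂| + M₁ * |c₁ - c₂| + 1 / 2 * (M₂ * |c₁ - c₂|) := by
        rw [h4, h5]; linarith [e1, e2, e3]
    _ = (K + M₁ + M₂ / 2) * |c₁ - c₂| := by ring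
    _ ≤ (K + M₁ + M₂ / 2) * V * |ℓ₁ - ℓ₂| := by linarith [hmul]
end

section
/- Let x₀ ∈ ℝ, K > 0, and let μ, σ : [0,∞) × ℝ → ℝ. Suppose: μ is continuous, locally Lipschitz continuous, and of linear growth; σ is continuous, locally Lipschitz continuous, and Lipschitz continuous in its second entry; v ≤ σ(t,y) ≤ V for all t, y, where 0 < v < V; for each y, t ↦ σ(t,y) is differentiable with continuous derivative ∂₁σ(t,y) satisfying |∂₁σ(t,y)| ≤ Kσ(t,y)²; for each t, x ↦ σ(t,x) is differentiable with derivative ∂₂σ(t,x); and ∂₁σ and ∂₂σ are locally Lipschitz continuous. Define h(t,x) := ∫_{x₀}^x (1/σ(t,y)) dy, let ρ(t,·) be the inverse of h(t,·), let g(t,x) := ∫_{x₀}^x ∂₁σ(t,y)/σ(t,y)² dy, and define μ*(t,ℓ) := −g(t, ρ(t,ℓ)) + μ(t, ρ(t,ℓ))/σ(t, ρ(t,ℓ)) − (1/2)∂₂σ(t, ρ(t,ℓ)). Then μ* is locally Lipschitz continuous and of linear growth. -/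
set_option maxHeartbeats 1600000

set_option linter.deprecated false

private lemma contAux {f : ℝ → ℝ → ℝ}
    (hf : ContinuousOn (fun p : ℝ × ℝ => f p.1 p.2) (Set.Ici 0 ×ˢ Set.univ))
    {t : ℝ} (ht : 0 ≤ t) : Continuous (fun y => f t y) := by
  rw [← continuousOn_univ]
  have hc : Continuous (fun y : ℝ => ((t, y) : ℝ × ℝ)) := by continuity
  exact hf.comp hc.continuousOn (fun y _ => ⟨ht, trivial⟩)

private lemma absIntegralGe {f : ℝ → ℝ} (hf : Continuous f) {c : ℝ}
    (hfc : ∀ y, c ≤ f y) (hc : 0 ≤ c) (a b : ℝ) :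
    c * |b - a| ≤ |∫ y in a..b, f y| := by
  have key : ∀ a b : ℝ, a ≤ b → c * |b - a| ≤ |∫ y in a..b, f y| := by
    intro a b hab
    have h1 : ∫ _y in a..b, (c : ℝ) ≤ ∫ y in a..b, f y :=
      intervalIntegral.integral_mono_on hab intervalIntegrable_const
        (hf.intervalIntegrable a b) (fun x _ => hfc x)
    rw [intervalIntegral.integral_const, smul_eq_mul] at h1
    have hba : 0 ≤ b - a := by linarith
    calc c * |b - a| = (b - a) * c := by rw [abs_of_nonneg hba]; ring
    _ ≤ ∫ y in a..b, f y := h1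
    _ ≤ |∫ y in a..b, f y| := le_abs_self _
  rcases le_total a b with hab | hba
  · exact key a b hab
  · have h2 := key b a hba
    rw [intervalIntegral.integral_symm a b, abs_neg, abs_sub_comm a b] at h2
    exact h2

private lemma absDerivLe {f : ℝ → ℝ} {f' x M : ℝ}
    (hd : HasDerivAt f f' x) (hl : ∀ a b : ℝ, |f a - f b| ≤ M * |a - b|) : |f'| ≤ M := by
  have ht := (hasDerivAt_iff_tendsto_slope.1 hd).abs
  refine le_of_tendsto ht ?_
  filter_upwards [self_mem_nhdsWithin] with y hy
  have hyx : y ≠ x := hy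
  rw [slope_def_field, abs_div]
  have hpos : 0 < |y - x| := abs_pos.2 (sub_ne_zero.2 hyx)
  rw [div_le_iff₀ hpos]
  exact hl y x


private lemma absTri (a₁ b₁ c₁ a₂ b₂ c₂ : ℝ) :
    |(-a₁ + b₁ - 1 / 2 * c₁) - (-a₂ + b₂ - 1 / 2 * c₂)|
      ≤ |a₁ - a₂| + |b₁ - b₂| + 1 / 2 * |c₁ - c₂| := by
  have e : (-a₁ + b₁ - 1/2*c₁) - (-a₂ + b₂ - 1/2*c₂)
      = (-(a₁ - a₂)) + ((b₁ - b₂) + (-(1/2*(c₁ - c₂)))) := by ring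
  rw [e]
  refine (abs_add_le _ _).trans ?_
  have h2 := abs_add_le (b₁ - b₂) (-(1/2*(c₁ - c₂)))
  have h3 : |(-(1/2*(c₁ - c₂)))| = 1/2 * |c₁ - c₂| := by
    rw [abs_neg, abs_mul]; norm_num
  rw [abs_neg]
  linarith


/-- A function `g : [0,∞) × ℝ → ℝ` is locally Lipschitz continuous if on every compact
subset `K` of `[0,∞) × ℝ` there is `M_K > 0` with
`|g(t₁,x₁) − g(t₂,x₂)| ≤ M_K (|t₁ − t₂| + |x₁ − x₂|)` on `K`. -/
def LocallyLipschitzHalfPlane (g : ℝ → ℝ → ℝ) : Prop :=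
  ∀ K : Set (ℝ × ℝ), IsCompact K → K ⊆ Set.Ici 0 ×ˢ Set.univ →
    ∃ M > 0, ∀ p ∈ K, ∀ q ∈ K,
      |g p.1 p.2 - g q.1 q.2| ≤ M * (|p.1 - q.1| + |p.2 - q.2|)

/-- A function `g : [0,∞) × ℝ → ℝ` is of linear growth if there is `E > 0` with
`|g(t,x)| ≤ E (1 + t + |x|)`. -/
def LinearGrowthHalfPlane (g : ℝ → ℝ → ℝ) : Prop :=
  ∃ E > 0, ∀ t, 0 ≤ t → ∀ x : ℝ, |g t x| ≤ E * (1 + t + |x|)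

/-- Lemma 3.4: the transformed drift
`μ*(t,ℓ) = −g(t,ρ(t,ℓ)) + (μ/σ)(t,ρ(t,ℓ)) − (1/2)∂₂σ(t,ρ(t,ℓ))`
is locally Lipschitz continuous and of linear growth.
Here `D₁ = ∂₁σ`, `D₂ = ∂₂σ`, `h(t,x) = ∫_{x₀}^x dy/σ(t,y)`, `ρ(t,·) = h(t,·)⁻¹`,
and `g(t,x) = ∫_{x₀}^x ∂₁σ(t,y)/σ(t,y)² dy`. -/
theorem transformed_drift_locallyLipschitz_linearGrowth
    (x₀ v V K : ℝ) (hv : 0 < v) (hvV : v < V) (hK : 0 < K)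
    (μ σ D₁ D₂ : ℝ → ℝ → ℝ)
    (hμcont : ContinuousOn (fun p : ℝ × ℝ => μ p.1 p.2) (Set.Ici 0 ×ˢ Set.univ))
    (hμLip : LocallyLipschitzHalfPlane μ)
    (hμGrowth : LinearGrowthHalfPlane μ)
    (hσcont : ContinuousOn (fun p : ℝ × ℝ => σ p.1 p.2) (Set.Ici 0 ×ˢ Set.univ))
    (hσLip : LocallyLipschitzHalfPlane σ)
    (hσLipSecond : ∃ M > 0, ∀ t, 0 ≤ t → ∀ x₁ x₂ : ℝ,
      |σ t x₁ - σ t x₂| ≤ M * |x₁ - x₂|)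
    (hlb : ∀ t, 0 ≤ t → ∀ y, v ≤ σ t y)
    (hub : ∀ t, 0 ≤ t → ∀ y, σ t y ≤ V)
    (hD₁ : ∀ y : ℝ, ∀ t, 0 ≤ t →
      HasDerivWithinAt (fun s => σ s y) (D₁ t y) (Set.Ici 0) t)
    (hD₁cont : ContinuousOn (fun p : ℝ × ℝ => D₁ p.1 p.2) (Set.Ici 0 ×ˢ Set.univ))
    (hD₁bound : ∀ t, 0 ≤ t → ∀ y, |D₁ t y| ≤ K * (σ t y) ^ 2)
    (hD₂ : ∀ t, 0 ≤ t → ∀ x : ℝ, HasDerivAt (σ t) (D₂ t x) x)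
    (hD₁Lip : LocallyLipschitzHalfPlane D₁)
    (hD₂Lip : LocallyLipschitzHalfPlane D₂)
    (h ρ g : ℝ → ℝ → ℝ)
    (hdef : ∀ t x, h t x = ∫ y in x₀..x, (σ t y)⁻¹)
    (hρ : ∀ t, 0 ≤ t → ∀ y, h t (ρ t y) = y)
    (hgdef : ∀ t x, g t x = ∫ y in x₀..x, D₁ t y / (σ t y) ^ 2)
    (μs : ℝ → ℝ → ℝ)
    (hμs : ∀ t ℓ, μs t ℓ =
      -(g t (ρ t ℓ)) + μ t (ρ t ℓ) / σ t (ρ t ℓ) - (1 / 2) * D₂ t (ρ t ℓ)) :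
    LocallyLipschitzHalfPlane μs ∧ LinearGrowthHalfPlane μs := by
  obtain ⟨M₂, hM₂pos, hM₂⟩ := hσLipSecond
  obtain ⟨E, hEpos, hE⟩ := hμGrowth
  have hV : 0 < V := hv.trans hvV
  have hσt : ∀ t, 0 ≤ t → Continuous (fun y => σ t y) := fun t ht => contAux hσcont ht
  have hD₁t : ∀ t, 0 ≤ t → Continuous (fun y => D₁ t y) := fun t ht => contAux hD₁cont ht
  have hσpos : ∀ t, 0 ≤ t → ∀ y, 0 < σ t y := fun t ht y => lt_of_lt_of_le hv (hlb t ht y)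
  have hinvcont : ∀ t, 0 ≤ t → Continuous (fun y => (σ t y)⁻¹) :=
    fun t ht => (hσt t ht).inv₀ (fun y => (hσpos t ht y).ne')
  have hgintc : ∀ t, 0 ≤ t → Continuous (fun y => D₁ t y / (σ t y) ^ 2) :=
    fun t ht => (hD₁t t ht).div ((hσt t ht).pow 2)
      (fun y => pow_ne_zero 2 (hσpos t ht y).ne')
  have hintInv : ∀ t, 0 ≤ t → ∀ a b : ℝ,
      IntervalIntegrable (fun y => (σ t y)⁻¹) MeasureTheory.volume a b :=
    fun t ht a b => (hinvcont t ht).intervalIntegrable a b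
  have hintG : ∀ t, 0 ≤ t → ∀ a b : ℝ,
      IntervalIntegrable (fun y => D₁ t y / (σ t y)^2) MeasureTheory.volume a b :=
    fun t ht a b => (hgintc t ht).intervalIntegrable a b
  have hinvlb : ∀ t, 0 ≤ t → ∀ y, V⁻¹ ≤ (σ t y)⁻¹ := by
    intro t ht y
    exact inv_anti₀ (hσpos t ht y) (hub t ht y)
  have hHdiff : ∀ t, 0 ≤ t → ∀ a b : ℝ, h t b - h t a = ∫ y in a..b, (σ t y)⁻¹ := by
    intro t ht a b
    have := intervalIntegral.integral_add_adjacent_intervals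
      (hintInv t ht x₀ a) (hintInv t ht a b)
    rw [hdef, hdef]
    linarith
  have hdisp : ∀ t, 0 ≤ t → ∀ a b : ℝ, |b - a| ≤ V * |h t b - h t a| := by
    intro t ht a b
    have h1 := absIntegralGe (hinvcont t ht) (hinvlb t ht) (inv_nonneg.2 hV.le) a b
    rw [← hHdiff t ht a b] at h1
    have h2 := mul_le_mul_of_nonneg_left h1 hV.le
    rw [← mul_assoc, mul_inv_cancel₀ hV.ne', one_mul] at h2
    exact h2
  have hHx₀ : ∀ t, h t x₀ = 0 := by
    intro t; rw [hdef, intervalIntegral.integral_same]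
  have hρbound : ∀ t, 0 ≤ t → ∀ ℓ : ℝ, |ρ t ℓ - x₀| ≤ V * |ℓ| := by
    intro t ht ℓ
    have := hdisp t ht x₀ (ρ t ℓ)
    rwa [hρ t ht ℓ, hHx₀ t, sub_zero] at this
  have hgx : ∀ t, 0 ≤ t → ∀ a b : ℝ, |g t b - g t a| ≤ K * |b - a| := by
    intro t ht a b
    have hadj := intervalIntegral.integral_add_adjacent_intervals
      (hintG t ht x₀ a) (hintG t ht a b)
    have heq : g t b - g t a = ∫ y in a..b, D₁ t y / (σ t y) ^ 2 := by
      rw [hgdef, hgdef]; linarith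
    rw [heq]
    have hb : ∀ y ∈ Set.uIoc a b, ‖D₁ t y / (σ t y) ^ 2‖ ≤ K := by
      intro y _
      have hσ2 : (0:ℝ) < (σ t y) ^ 2 := pow_pos (hσpos t ht y) 2
      rw [Real.norm_eq_abs, abs_div, abs_of_pos hσ2, div_le_iff₀ hσ2]
      exact hD₁bound t ht y
    have := intervalIntegral.norm_integral_le_of_norm_le_const hb
    rwa [Real.norm_eq_abs] at this
  have hgbound : ∀ t, 0 ≤ t → ∀ x : ℝ, |g t x| ≤ K * |x - x₀| := by
    intro t ht x
    have := hgx t ht x₀ x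
    have hgx₀ : g t x₀ = 0 := by rw [hgdef, intervalIntegral.integral_same]
    rwa [hgx₀, sub_zero] at this
  have hD₂bound : ∀ t, 0 ≤ t → ∀ x : ℝ, |D₂ t x| ≤ M₂ :=
    fun t ht x => absDerivLe (hD₂ t ht x) (fun a b => hM₂ t ht a b)
  have htri : ∀ t₁ t₂ ℓ₁ ℓ₂ : ℝ,
      |μs t₁ ℓ₁ - μs t₂ ℓ₂| ≤ |g t₁ (ρ t₁ ℓ₁) - g t₂ (ρ t₂ ℓ₂)|
        + |μ t₁ (ρ t₁ ℓ₁) / σ t₁ (ρ t₁ ℓ₁) - μ t₂ (ρ t₂ ℓ₂) / σ t₂ (ρ t₂ ℓ₂)|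
        + 1 / 2 * |D₂ t₁ (ρ t₁ ℓ₁) - D₂ t₂ (ρ t₂ ℓ₂)| := by
    intro t₁ t₂ ℓ₁ ℓ₂
    rw [hμs, hμs]
    exact absTri _ _ _ _ _ _
  constructor
  · -- Local Lipschitz continuity
    intro Kc hKc hKsub
    rcases Set.eq_empty_or_nonempty Kc with rfl | ⟨p₀, hp₀⟩
    · exact ⟨1, one_pos, by simp⟩
    obtain ⟨r, hr⟩ := hKc.isBounded.subset_closedBall 0
    have hr0 : 0 ≤ r := by
      have := hr hp₀
      rw [Metric.mem_closedBall] at this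
      exact le_trans dist_nonneg this
    have hmem : ∀ p ∈ Kc, 0 ≤ p.1 ∧ p.1 ≤ r ∧ |p.2| ≤ r := by
      intro p hp
      have h1 := hKsub hp
      have h2 := hr hp
      simp only [Metric.mem_closedBall, Prod.dist_eq, Real.dist_eq, Prod.fst_zero,
        Prod.snd_zero, sub_zero, sup_le_iff] at h2
      exact ⟨h1.1, le_trans (le_abs_self _) h2.1, h2.2⟩
    set B : Set ℝ := Set.Icc (x₀ - V*r) (x₀ + V*r) with hB
    set K' : Set (ℝ × ℝ) := Set.Icc (0:ℝ) r ×ˢ B with hK'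
    have hK'c : IsCompact K' := isCompact_Icc.prod isCompact_Icc
    have hK'sub : K' ⊆ Set.Ici 0 ×ˢ Set.univ := fun p hp => ⟨hp.1.1, trivial⟩
    obtain ⟨Mσ, hMσ0, hMσ⟩ := hσLip K' hK'c hK'sub
    obtain ⟨Mμ, hMμ0, hMμ⟩ := hμLip K' hK'c hK'sub
    obtain ⟨M₁, hM₁0, hM₁⟩ := hD₁Lip K' hK'c hK'sub
    obtain ⟨Md, hMd0, hMd⟩ := hD₂Lip K' hK'c hK'sub
    have hv2 : (0:ℝ) < v^2 := pow_pos hv 2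
    have hv4 : (0:ℝ) < v^4 := pow_pos hv 4
    have hvv : (0:ℝ) < v*v := mul_pos hv hv
    set Lρ : ℝ := V * (1 + Mσ * V * r / v^2) with hLρdef
    set Cg : ℝ := M₁ / v^2 + 2*K*V^3*Mσ / v^4 with hCgdef
    set Bμ : ℝ := E * (1 + r + |x₀| + V*r) with hBμdef
    clear_value Lρ Cg Bμ
    have hVr0 : 0 ≤ V * r := mul_nonneg hV.le hr0
    have hLρ0 : 0 ≤ Lρ := by
      rw [hLρdef]
      have h1 : 0 ≤ Mσ * V * r / v^2 :=
        div_nonneg (mul_nonneg (mul_nonneg hMσ0.le hV.le) hr0) hv2.le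
      exact mul_nonneg hV.le (by linarith)
    have hCg0 : 0 ≤ Cg := by
      rw [hCgdef]
      have h1 : 0 ≤ M₁ / v^2 := div_nonneg hM₁0.le hv2.le
      have h2 : 0 ≤ 2*K*V^3*Mσ / v^4 :=
        div_nonneg (mul_nonneg (mul_nonneg (mul_nonneg (by norm_num) hK.le)
          (pow_nonneg hV.le 3)) hMσ0.le) hv4.le
      linarith
    have hBμ0 : 0 ≤ Bμ := by
      rw [hBμdef]
      have h1 : 0 ≤ 1 + r + |x₀| + V*r := by
        have := abs_nonneg x₀; linarith
      exact mul_nonneg hEpos.le h1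
    have hcoef0 : 0 ≤ Mμ/v + Bμ*Mσ/(v*v) + Md/2 := by
      have h1 : 0 ≤ Mμ/v := div_nonneg hMμ0.le hv.le
      have h2 : 0 ≤ Bμ*Mσ/(v*v) := div_nonneg (mul_nonneg hBμ0 hMσ0.le) hvv.le
      linarith
    set M : ℝ := K * Lρ + Cg * (V*r) + (Mμ/v + Bμ*Mσ/(v*v) + Md/2) * (1 + Lρ) + 1
      with hMdef
    clear_value M
    have hM0 : 0 < M := by
      have h1 : 0 ≤ K * Lρ := mul_nonneg hK.le hLρ0
      have h2 : 0 ≤ Cg * (V*r) := mul_nonneg hCg0 hVr0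
      have h3 : 0 ≤ (Mμ/v + Bμ*Mσ/(v*v) + Md/2) * (1 + Lρ) :=
        mul_nonneg hcoef0 (by linarith)
      rw [hMdef]
      have h4 := add_nonneg (add_nonneg h1 h2) h3
      linarith
    refine ⟨M, hM0, ?_⟩
    rintro ⟨t₁, ℓ₁⟩ hp ⟨t₂, ℓ₂⟩ hq
    dsimp only
    obtain ⟨ht₁, ht₁r, hℓ₁⟩ := hmem _ hp
    obtain ⟨ht₂, ht₂r, hℓ₂⟩ := hmem _ hq
    set r₁ := ρ t₁ ℓ₁ with hr₁
    set r₂ := ρ t₂ ℓ₂ with hr₂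
    set d := |t₁ - t₂| + |ℓ₁ - ℓ₂| with hddef
    clear_value d
    have hd0 : 0 ≤ d := by
      rw [hddef]; positivity
    have hr₁B : r₁ ∈ B := by
      have h1 := hρbound t₁ ht₁ ℓ₁
      have h2 : V * |ℓ₁| ≤ V * r := mul_le_mul_of_nonneg_left hℓ₁ hV.le
      have h3 := abs_le.1 (h1.trans h2)
      exact ⟨by linarith [h3.1], by linarith [h3.2]⟩
    have hr₂B : r₂ ∈ B := by
      have h1 := hρbound t₂ ht₂ ℓ₂
      have h2 : V * |ℓ₂| ≤ V * r := mul_le_mul_of_nonneg_left hℓ₂ hV.le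
      have h3 := abs_le.1 (h1.trans h2)
      exact ⟨by linarith [h3.1], by linarith [h3.2]⟩
    have hx₀B : x₀ ∈ B := ⟨by linarith, by linarith⟩
    have hyB : ∀ y ∈ Set.uIoc x₀ r₂, y ∈ B := by
      intro y hy
      have h1 := Set.uIoc_subset_uIcc hy
      rcases le_total x₀ r₂ with hc | hc
      · rw [Set.uIcc_of_le hc] at h1
        exact ⟨le_trans hx₀B.1 h1.1, le_trans h1.2 hr₂B.2⟩
      · rw [Set.uIcc_of_ge hc] at h1
        exact ⟨le_trans hr₂B.1 h1.1, le_trans h1.2 hx₀B.2⟩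
    have ht₁m : t₁ ∈ Set.Icc (0:ℝ) r := ⟨ht₁, ht₁r⟩
    have ht₂m : t₂ ∈ Set.Icc (0:ℝ) r := ⟨ht₂, ht₂r⟩
    have hσts : ∀ y ∈ B, |σ t₁ y - σ t₂ y| ≤ Mσ * |t₁ - t₂| := by
      intro y hy
      have := hMσ (t₁, y) ⟨ht₁m, hy⟩ (t₂, y) ⟨ht₂m, hy⟩
      simpa using this
    have hD₁ts : ∀ y ∈ B, |D₁ t₁ y - D₁ t₂ y| ≤ M₁ * |t₁ - t₂| := by
      intro y hy
      have := hM₁ (t₁, y) ⟨ht₁m, hy⟩ (t₂, y) ⟨ht₂m, hy⟩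
      simpa using this
    have hstepC : |h t₂ r₂ - h t₁ r₂| ≤ Mσ * |t₁ - t₂| / v^2 * |r₂ - x₀| := by
      have heq : h t₂ r₂ - h t₁ r₂ = ∫ y in x₀..r₂, ((σ t₂ y)⁻¹ - (σ t₁ y)⁻¹) := by
        rw [intervalIntegral.integral_sub (hintInv t₂ ht₂ x₀ r₂)
          (hintInv t₁ ht₁ x₀ r₂), hdef, hdef]
      rw [heq]
      have hb : ∀ y ∈ Set.uIoc x₀ r₂,
          ‖(σ t₂ y)⁻¹ - (σ t₁ y)⁻¹‖ ≤ Mσ * |t₁ - t₂| / v^2 := by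
        intro y hy
        have hyB' := hyB y hy
        have hσ₁ := hσpos t₁ ht₁ y
        have hσ₂ := hσpos t₂ ht₂ y
        have e : (σ t₂ y)⁻¹ - (σ t₁ y)⁻¹ = (σ t₁ y - σ t₂ y) / (σ t₂ y * σ t₁ y) :=
          inv_sub_inv hσ₂.ne' hσ₁.ne'
        rw [Real.norm_eq_abs, e, abs_div, abs_of_pos (mul_pos hσ₂ hσ₁)]
        have hnum := hσts y hyB'
        have hden : v^2 ≤ σ t₂ y * σ t₁ y := by
          calc v^2 = v*v := by ring
          _ ≤ σ t₂ y * σ t₁ y :=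
            mul_le_mul (hlb t₂ ht₂ y) (hlb t₁ ht₁ y) hv.le
              (le_trans hv.le (hlb t₂ ht₂ y))
        exact div_le_div₀ (mul_nonneg hMσ0.le (abs_nonneg _)) hnum hv2 hden
      have h5 := intervalIntegral.norm_integral_le_of_norm_le_const hb
      rwa [Real.norm_eq_abs] at h5
    have hr₂x₀ : |r₂ - x₀| ≤ V * r :=
      (hρbound t₂ ht₂ ℓ₂).trans (mul_le_mul_of_nonneg_left hℓ₂ hV.le)
    have hρLip : |r₁ - r₂| ≤ Lρ * d := by
      have h1 := hdisp t₁ ht₁ r₂ r₁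
      have h2 : h t₁ r₁ - h t₁ r₂ = (ℓ₁ - ℓ₂) + (h t₂ r₂ - h t₁ r₂) := by
        rw [hρ t₁ ht₁ ℓ₁]
        have h2' : h t₂ r₂ = ℓ₂ := hρ t₂ ht₂ ℓ₂
        rw [h2']; ring
      have h3 : |h t₁ r₁ - h t₁ r₂| ≤ |ℓ₁ - ℓ₂| + Mσ * |t₁ - t₂| / v^2 * (V * r) := by
        rw [h2]
        refine (abs_add_le _ _).trans ?_
        have h4 : Mσ * |t₁ - t₂| / v^2 * |r₂ - x₀| ≤ Mσ * |t₁ - t₂| / v^2 * (V * r) :=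
          mul_le_mul_of_nonneg_left hr₂x₀
            (div_nonneg (mul_nonneg hMσ0.le (abs_nonneg _)) hv2.le)
        linarith [hstepC]
      have h5 := mul_le_mul_of_nonneg_left h3 hV.le
      have h6 : |r₁ - r₂| ≤ V * (|ℓ₁ - ℓ₂| + Mσ * |t₁ - t₂| / v^2 * (V * r)) :=
        le_trans h1 h5
      have hexp : V * (|ℓ₁ - ℓ₂| + Mσ * |t₁ - t₂| / v^2 * (V * r))
          = V * |ℓ₁ - ℓ₂| + (V * (Mσ * V * r / v^2)) * |t₁ - t₂| := by ring
      rw [hexp] at h6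
      have hc1 : V * |ℓ₁ - ℓ₂| ≤ Lρ * |ℓ₁ - ℓ₂| := by
        apply mul_le_mul_of_nonneg_right _ (abs_nonneg _)
        rw [hLρdef]
        have h7 : 0 ≤ V * (Mσ * V * r / v^2) :=
          mul_nonneg hV.le
            (div_nonneg (mul_nonneg (mul_nonneg hMσ0.le hV.le) hr0) hv2.le)
        linarith
      have hc2 : (V * (Mσ * V * r / v^2)) * |t₁ - t₂| ≤ Lρ * |t₁ - t₂| := by
        apply mul_le_mul_of_nonneg_right _ (abs_nonneg _)
        rw [hLρdef]
        linarith [hV.le]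
      rw [hddef]
      calc |r₁ - r₂| ≤ V * |ℓ₁ - ℓ₂| + (V * (Mσ * V * r / v^2)) * |t₁ - t₂| := h6
      _ ≤ Lρ * |ℓ₁ - ℓ₂| + Lρ * |t₁ - t₂| := by linarith
      _ = Lρ * (|t₁ - t₂| + |ℓ₁ - ℓ₂|) := by ring
    have hgdiff : |g t₁ r₁ - g t₂ r₂| ≤ K * (Lρ * d) + Cg * |t₁ - t₂| * (V * r) := by
      have hpart1 : |g t₁ r₁ - g t₁ r₂| ≤ K * (Lρ * d) :=
        (hgx t₁ ht₁ r₂ r₁).trans (mul_le_mul_of_nonneg_left hρLip hK.le)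
      have hpart2 : |g t₁ r₂ - g t₂ r₂| ≤ Cg * |t₁ - t₂| * (V * r) := by
        have heq : g t₁ r₂ - g t₂ r₂
            = ∫ y in x₀..r₂, (D₁ t₁ y / (σ t₁ y)^2 - D₁ t₂ y / (σ t₂ y)^2) := by
          rw [intervalIntegral.integral_sub (hintG t₁ ht₁ x₀ r₂)
            (hintG t₂ ht₂ x₀ r₂), hgdef, hgdef]
        rw [heq]
        have hb : ∀ y ∈ Set.uIoc x₀ r₂,
            ‖D₁ t₁ y / (σ t₁ y)^2 - D₁ t₂ y / (σ t₂ y)^2‖ ≤ Cg * |t₁ - t₂| := by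
          intro y hy
          have hyB' := hyB y hy
          have hb1 : v ≤ σ t₁ y := hlb t₁ ht₁ y
          have hb2 : σ t₁ y ≤ V := hub t₁ ht₁ y
          have he1 : v ≤ σ t₂ y := hlb t₂ ht₂ y
          have he2 : σ t₂ y ≤ V := hub t₂ ht₂ y
          have hbpos : 0 < σ t₁ y := lt_of_lt_of_le hv hb1
          have hepos : 0 < σ t₂ y := lt_of_lt_of_le hv he1
          have hac : |D₁ t₁ y - D₁ t₂ y| ≤ M₁ * |t₁ - t₂| := hD₁ts y hyB'
          have hbe : |σ t₁ y - σ t₂ y| ≤ Mσ * |t₁ - t₂| := hσts y hyB'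
          have hcb : |D₁ t₂ y| ≤ K * V^2 := by
            have h8 := hD₁bound t₂ ht₂ y
            have h9 : (σ t₂ y)^2 ≤ V^2 := pow_le_pow_left₀ hepos.le he2 2
            have h10 := mul_le_mul_of_nonneg_left h9 hK.le
            linarith
          have eexp : D₁ t₁ y / (σ t₁ y)^2 - D₁ t₂ y / (σ t₂ y)^2
              = (D₁ t₁ y - D₁ t₂ y) / (σ t₁ y)^2
                + D₁ t₂ y * ((σ t₂ y - σ t₁ y) * (σ t₂ y + σ t₁ y))
                  / ((σ t₁ y)^2 * (σ t₂ y)^2) := by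
            field_simp [hbpos.ne', hepos.ne']
            ring
          rw [Real.norm_eq_abs, eexp]
          refine (abs_add_le _ _).trans ?_
          have hb2pos : (0:ℝ) < (σ t₁ y)^2 := pow_pos hbpos 2
          have he2pos : (0:ℝ) < (σ t₂ y)^2 := pow_pos hepos 2
          have hterm1 : |(D₁ t₁ y - D₁ t₂ y) / (σ t₁ y)^2| ≤ M₁ * |t₁ - t₂| / v^2 := by
            rw [abs_div, abs_of_pos hb2pos]
            refine div_le_div₀ (mul_nonneg hM₁0.le (abs_nonneg _)) hac hv2
              (pow_le_pow_left₀ hv.le hb1 2)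
          have hterm2 : |D₁ t₂ y * ((σ t₂ y - σ t₁ y) * (σ t₂ y + σ t₁ y))
                / ((σ t₁ y)^2 * (σ t₂ y)^2)|
              ≤ K * V^2 * (Mσ * |t₁ - t₂| * (2*V)) / (v^2 * v^2) := by
            rw [abs_div, abs_of_pos (mul_pos hb2pos he2pos), abs_mul]
            refine div_le_div₀ ?_ ?_ (mul_pos hv2 hv2)
              (mul_le_mul (pow_le_pow_left₀ hv.le hb1 2) (pow_le_pow_left₀ hv.le he1 2)
                hv2.le (pow_nonneg hbpos.le 2))
            · exact mul_nonneg (mul_nonneg hK.le (pow_nonneg hV.le 2))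
                (mul_nonneg (mul_nonneg hMσ0.le (abs_nonneg _))
                  (by linarith))
            · have hsum : |σ t₂ y + σ t₁ y| ≤ 2 * V := by
                rw [abs_of_pos (by linarith)]; linarith
              have hbe' : |σ t₂ y - σ t₁ y| ≤ Mσ * |t₁ - t₂| := by
                rwa [abs_sub_comm] at hbe
              have h9 : |(σ t₂ y - σ t₁ y) * (σ t₂ y + σ t₁ y)|
                  ≤ Mσ * |t₁ - t₂| * (2*V) := by
                rw [abs_mul]
                exact mul_le_mul hbe' hsum (abs_nonneg _)
                  (mul_nonneg hMσ0.le (abs_nonneg _))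
              exact mul_le_mul hcb h9 (abs_nonneg _)
                (mul_nonneg hK.le (pow_nonneg hV.le 2))
          have hCgeq : M₁ * |t₁ - t₂| / v^2
              + K * V^2 * (Mσ * |t₁ - t₂| * (2*V)) / (v^2 * v^2)
              = Cg * |t₁ - t₂| := by
            rw [hCgdef]
            field_simp [hv.ne']
          linarith
        have h10 := intervalIntegral.norm_integral_le_of_norm_le_const hb
        rw [Real.norm_eq_abs] at h10
        calc |∫ y in x₀..r₂, (D₁ t₁ y / (σ t₁ y)^2 - D₁ t₂ y / (σ t₂ y)^2)|
            ≤ Cg * |t₁ - t₂| * |r₂ - x₀| := h10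
        _ ≤ Cg * |t₁ - t₂| * (V * r) :=
            mul_le_mul_of_nonneg_left hr₂x₀ (mul_nonneg hCg0 (abs_nonneg _))
      calc |g t₁ r₁ - g t₂ r₂| ≤ |g t₁ r₁ - g t₁ r₂| + |g t₁ r₂ - g t₂ r₂| := by
            have h11 := abs_add_le (g t₁ r₁ - g t₁ r₂) (g t₁ r₂ - g t₂ r₂)
            simpa using h11
      _ ≤ K * (Lρ * d) + Cg * |t₁ - t₂| * (V * r) := by linarith
    set e₁ := |t₁ - t₂| + |r₁ - r₂| with he₁def
    clear_value e₁
    have he₁0 : 0 ≤ e₁ := by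
      rw [he₁def]; positivity
    have he₁le : e₁ ≤ (1 + Lρ) * d := by
      linarith [hρLip, abs_nonneg (t₁ - t₂), abs_nonneg (ℓ₁ - ℓ₂), hddef.le, hddef.ge,
        he₁def.le, he₁def.ge]
    have hp₁K' : ((t₁, r₁) : ℝ × ℝ) ∈ K' := ⟨ht₁m, hr₁B⟩
    have hp₂K' : ((t₂, r₂) : ℝ × ℝ) ∈ K' := ⟨ht₂m, hr₂B⟩
    have hμσdiff : |μ t₁ r₁ / σ t₁ r₁ - μ t₂ r₂ / σ t₂ r₂|
        ≤ (Mμ/v + Bμ*Mσ/(v*v)) * e₁ := by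
      have hσ₁ := hσpos t₁ ht₁ r₁
      have hσ₂ := hσpos t₂ ht₂ r₂
      have hμd : |μ t₁ r₁ - μ t₂ r₂| ≤ Mμ * e₁ := by
        have hh := hMμ (t₁, r₁) hp₁K' (t₂, r₂) hp₂K'
        rw [he₁def]
        simpa using hh
      have hσd : |σ t₁ r₁ - σ t₂ r₂| ≤ Mσ * e₁ := by
        have hh := hMσ (t₁, r₁) hp₁K' (t₂, r₂) hp₂K'
        rw [he₁def]
        simpa using hh
      have hμ₂b : |μ t₂ r₂| ≤ Bμ := by
        have h1 := hE t₂ ht₂ r₂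
        have h2 : |r₂| ≤ |x₀| + V * r := by
          have h2' := abs_sub_abs_le_abs_sub r₂ x₀
          linarith [hr₂x₀]
        rw [hBμdef]
        have h3 : E * (1 + t₂ + |r₂|) ≤ E * (1 + r + |x₀| + V*r) :=
          mul_le_mul_of_nonneg_left (by linarith) hEpos.le
        linarith
      have e : μ t₁ r₁ / σ t₁ r₁ - μ t₂ r₂ / σ t₂ r₂
          = (μ t₁ r₁ - μ t₂ r₂) / σ t₁ r₁
            + μ t₂ r₂ * (σ t₂ r₂ - σ t₁ r₁) / (σ t₁ r₁ * σ t₂ r₂) := by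
        field_simp [hσ₁.ne', hσ₂.ne']
        ring
      rw [e]
      refine (abs_add_le _ _).trans ?_
      have hterm1 : |(μ t₁ r₁ - μ t₂ r₂) / σ t₁ r₁| ≤ Mμ * e₁ / v := by
        rw [abs_div, abs_of_pos hσ₁]
        exact div_le_div₀ (mul_nonneg hMμ0.le he₁0) hμd hv (hlb t₁ ht₁ r₁)
      have hterm2 : |μ t₂ r₂ * (σ t₂ r₂ - σ t₁ r₁) / (σ t₁ r₁ * σ t₂ r₂)|
          ≤ Bμ * (Mσ * e₁) / (v * v) := by
        rw [abs_div, abs_of_pos (mul_pos hσ₁ hσ₂), abs_mul]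
        refine div_le_div₀ (mul_nonneg hBμ0 (mul_nonneg hMσ0.le he₁0)) ?_ hvv
          (mul_le_mul (hlb t₁ ht₁ r₁) (hlb t₂ ht₂ r₂) hv.le
            (le_trans hv.le (hlb t₁ ht₁ r₁)))
        have hσd' : |σ t₂ r₂ - σ t₁ r₁| ≤ Mσ * e₁ := by rwa [abs_sub_comm] at hσd
        exact mul_le_mul hμ₂b hσd' (abs_nonneg _) hBμ0
      have heq2 : Mμ * e₁ / v + Bμ * (Mσ * e₁) / (v * v)
          = (Mμ/v + Bμ*Mσ/(v*v)) * e₁ := by ring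
      linarith
    have hD₂diff : |D₂ t₁ r₁ - D₂ t₂ r₂| ≤ Md * e₁ := by
      have hh := hMd (t₁, r₁) hp₁K' (t₂, r₂) hp₂K'
      rw [he₁def]
      simpa using hh
    have htri' := htri t₁ t₂ ℓ₁ ℓ₂
    have hDt : |t₁ - t₂| ≤ d := by rw [hddef]; linarith [abs_nonneg (ℓ₁ - ℓ₂)]
    have hfin1 : Cg * |t₁ - t₂| * (V * r) ≤ Cg * (V*r) * d := by
      have h1 := mul_le_mul_of_nonneg_left hDt (mul_nonneg hCg0 hVr0)
      linarith
    have hfin2 : (Mμ/v + Bμ*Mσ/(v*v)) * e₁ + Md/2 * e₁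
        ≤ (Mμ/v + Bμ*Mσ/(v*v) + Md/2) * ((1 + Lρ) * d) := by
      have h1 : (Mμ/v + Bμ*Mσ/(v*v) + Md/2) * e₁
          ≤ (Mμ/v + Bμ*Mσ/(v*v) + Md/2) * ((1 + Lρ) * d) :=
        mul_le_mul_of_nonneg_left he₁le hcoef0
      linarith
    rw [hMdef]
    linarith [htri', hgdiff, hμσdiff, hD₂diff, hfin1, hfin2, hd0]
  · -- Linear growth
    refine ⟨K*V + E/v*(1+|x₀|) + E*V/v + M₂/2 + 1, ?_, ?_⟩
    · have h1 : 0 ≤ K*V := mul_nonneg hK.le hV.le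
      have h2 : 0 ≤ E/v*(1+|x₀|) :=
        mul_nonneg (div_nonneg hEpos.le hv.le) (by linarith [abs_nonneg x₀])
      have h3 : 0 ≤ E*V/v := div_nonneg (mul_nonneg hEpos.le hV.le) hv.le
      linarith
    intro t ht ℓ
    set r := ρ t ℓ with hrdef
    have h1 : |g t r| ≤ K * (V * |ℓ|) :=
      (hgbound t ht r).trans (mul_le_mul_of_nonneg_left (hρbound t ht ℓ) hK.le)
    have h2 : |μ t r / σ t r| ≤ E * (1 + t + |r|) / v := by
      rw [abs_div, abs_of_pos (hσpos t ht r)]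
      have hnum : 0 ≤ E * (1 + t + |r|) :=
        mul_nonneg hEpos.le (by linarith [abs_nonneg r])
      exact div_le_div₀ hnum (hE t ht r) hv (hlb t ht r)
    have h3 : |D₂ t r| ≤ M₂ := hD₂bound t ht r
    have h4 : |r| ≤ |x₀| + V * |ℓ| := by
      have h4' := abs_sub_abs_le_abs_sub r x₀
      linarith [hρbound t ht ℓ]
    have htriv : |μs t ℓ| ≤ |g t r| + |μ t r / σ t r| + 1/2 * |D₂ t r| := by
      rw [hμs]
      have e : -(g t r) + μ t r / σ t r - 1/2 * D₂ t r
          = (-(g t r)) + (μ t r / σ t r + (-(1/2 * D₂ t r))) := by ring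
      rw [e]
      refine (abs_add_le _ _).trans ?_
      have h5 := abs_add_le (μ t r / σ t r) (-(1/2 * D₂ t r))
      have h6 : |(-(1/2 * D₂ t r))| = 1/2 * |D₂ t r| := by
        rw [abs_neg, abs_mul]; norm_num
      rw [abs_neg]
      linarith
    have h7 : E * (1 + t + |r|) / v ≤ E/v*(1+|x₀|) + E/v*t + E*V/v*|ℓ| := by
      have h8 : E * (1 + t + |r|) ≤ E * (1 + t + (|x₀| + V * |ℓ|)) :=
        mul_le_mul_of_nonneg_left (by linarith) hEpos.le
      have h9 : E * (1 + t + (|x₀| + V * |ℓ|)) / v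
          = E/v*(1+|x₀|) + E/v*t + E*V/v*|ℓ| := by ring
      rw [← h9]
      exact (div_le_div_iff_of_pos_right hv).2 h8
    have hb1 : |μs t ℓ| ≤ K*(V*|ℓ|) + (E/v*(1+|x₀|) + E/v*t + E*V/v*|ℓ|) + 1/2*M₂ := by
      linarith
    have hct : E/v ≤ K*V + E/v*(1+|x₀|) + E*V/v + M₂/2 + 1 := by
      have hh1 : 0 ≤ E/v * |x₀| := mul_nonneg (div_nonneg hEpos.le hv.le) (abs_nonneg x₀)
      have hh2 : 0 ≤ K*V := mul_nonneg hK.le hV.le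
      have hh3 : 0 ≤ E*V/v := div_nonneg (mul_nonneg hEpos.le hV.le) hv.le
      linarith
    have hcl : K*V + E*V/v ≤ K*V + E/v*(1+|x₀|) + E*V/v + M₂/2 + 1 := by
      have hh1 : 0 ≤ E/v*(1+|x₀|) :=
        mul_nonneg (div_nonneg hEpos.le hv.le) (by linarith [abs_nonneg x₀])
      linarith
    have hkv : 0 ≤ K*V := mul_nonneg hK.le hV.le
    have hev : 0 ≤ E*V/v := div_nonneg (mul_nonneg hEpos.le hV.le) hv.le
    linarith [mul_nonneg (sub_nonneg.2 hct) ht,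
      mul_nonneg (sub_nonneg.2 hcl) (abs_nonneg ℓ), hb1]
end

section
/- Let M > 0 and let μ* : [0,∞) × ℝ → ℝ be continuous with |μ*(t,x₁) − μ*(t,x₂)| ≤ M|x₁ − x₂| for all t ≥ 0, x₁, x₂ ∈ ℝ. Let F, B : [0,1] → ℝ be continuous, let r ∈ [0,1], a, b ∈ ℝ, and let y, z : [0,1−r] → ℝ be continuous functions satisfying y(t) = a + ∫_0^t μ*(r+u, y(u) + F(r+u) − F(r)) du and z(t) = b + ∫_0^t μ*(r+u, z(u) + B(r+u) − B(r)) du for all t ∈ [0,1−r]. Then for all t ∈ [0,1−r]: |y(t) − z(t)| ≤ K₁(‖F − B‖_∞ + |a − b|), where K₁ := max(2M, 1)·e^M and ‖F − B‖_∞ := sup_{s∈[0,1]} |F(s) − B(s)|. -/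
/-- Lemma 4.5: Gronwall comparison of two controlled ODEs driven by the
paths `F` and `B` respectively, with `K₁ = max(2M,1)·e^M`. -/
theorem gronwall_comparison_controlled_odes
    (M r a b : ℝ) (hM : 0 < M) (hr : r ∈ Set.Icc (0:ℝ) 1)
    (μs : ℝ → ℝ → ℝ)
    (hμcont : ContinuousOn (fun p : ℝ × ℝ => μs p.1 p.2) (Set.Ici 0 ×ˢ Set.univ))
    (hμLip : ∀ t, 0 ≤ t → ∀ x₁ x₂ : ℝ, |μs t x₁ - μs t x₂| ≤ M * |x₁ - x₂|)
    (F B y z : ℝ → ℝ)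
    (hF : ContinuousOn F (Set.Icc 0 1)) (hB : ContinuousOn B (Set.Icc 0 1))
    (hy : ContinuousOn y (Set.Icc 0 (1 - r)))
    (hz : ContinuousOn z (Set.Icc 0 (1 - r)))
    (hyeq : ∀ t ∈ Set.Icc (0:ℝ) (1 - r),
      y t = a + ∫ u in (0:ℝ)..t, μs (r + u) (y u + F (r + u) - F r))
    (hzeq : ∀ t ∈ Set.Icc (0:ℝ) (1 - r),
      z t = b + ∫ u in (0:ℝ)..t, μs (r + u) (z u + B (r + u) - B r)) :
    ∀ t ∈ Set.Icc (0:ℝ) (1 - r),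
      |y t - z t| ≤ (max (2 * M) 1 * Real.exp M) *
        ((⨆ s : Set.Icc (0:ℝ) 1, |F s.1 - B s.1|) + |a - b|) := by
  obtain ⟨hr0, hr1⟩ := hr
  have h1r : (0:ℝ) ≤ 1 - r := by linarith
  set D := ⨆ s : Set.Icc (0:ℝ) 1, |F s.1 - B s.1| with hDdef
  have hrange : (Set.range fun s : Set.Icc (0:ℝ) 1 => |F s.1 - B s.1|)
      = (fun x => |F x - B x|) '' Set.Icc (0:ℝ) 1 := by
    ext w
    constructor
    · rintro ⟨s, rfl⟩
      exact ⟨s.1, s.2, rfl⟩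
    · rintro ⟨x, hx, rfl⟩
      exact ⟨⟨x, hx⟩, rfl⟩
  have hbdd : BddAbove (Set.range fun s : Set.Icc (0:ℝ) 1 => |F s.1 - B s.1|) := by
    rw [hrange]
    exact isCompact_Icc.bddAbove_image (hF.sub hB).abs
  have hDs : ∀ s ∈ Set.Icc (0:ℝ) 1, |F s - B s| ≤ D := fun s hs =>
    le_ciSup hbdd (⟨s, hs⟩ : Set.Icc (0:ℝ) 1)
  have hD0 : 0 ≤ D := le_trans (abs_nonneg _) (hDs 0 ⟨le_refl 0, zero_le_one⟩)
  -- clamp function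
  set p : ℝ → ℝ := fun u => min (max u 0) (1 - r) with hpdef
  have hp_cont : Continuous p := by fun_prop
  have hp_mem : ∀ u, p u ∈ Set.Icc (0:ℝ) (1 - r) := fun u =>
    ⟨le_min (le_max_right u 0) h1r, min_le_right _ _⟩
  have hp_eq : ∀ t ∈ Set.Icc (0:ℝ) (1 - r), p t = t := by
    intro t ht
    simp only [hpdef, max_eq_left ht.1, min_eq_left ht.2]
  have hrp : ∀ u, r + p u ∈ Set.Icc (0:ℝ) 1 := by
    intro u
    have h := hp_mem u
    exact ⟨by linarith [h.1], by linarith [h.2]⟩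
  -- globally defined integrands
  set Gy : ℝ → ℝ := fun u => μs (r + p u) (y (p u) + F (r + p u) - F r) with hGydef
  set Gz : ℝ → ℝ := fun u => μs (r + p u) (z (p u) + B (r + p u) - B r) with hGzdef
  have hFr : r ∈ Set.Icc (0:ℝ) 1 := ⟨hr0, hr1⟩
  have hFcomp : Continuous fun u => F (r + p u) :=
    hF.comp_continuous (by fun_prop) hrp
  have hBcomp : Continuous fun u => B (r + p u) :=
    hB.comp_continuous (by fun_prop) hrp
  have hycomp : Continuous fun u => y (p u) := hy.comp_continuous hp_cont hp_mem
  have hzcomp : Continuous fun u => z (p u) := hz.comp_continuous hp_cont hp_mem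
  have hGy : Continuous Gy := by
    refine hμcont.comp_continuous (f := fun u => ((r + p u : ℝ),
      (y (p u) + F (r + p u) - F r : ℝ))) ?_ ?_
    · exact (continuous_const.add hp_cont).prodMk ((hycomp.add hFcomp).sub continuous_const)
    · intro u
      exact ⟨(hrp u).1, trivial⟩
  have hGz : Continuous Gz := by
    refine hμcont.comp_continuous (f := fun u => ((r + p u : ℝ),
      (z (p u) + B (r + p u) - B r : ℝ))) ?_ ?_
    · exact (continuous_const.add hp_cont).prodMk ((hzcomp.add hBcomp).sub continuous_const)
    · intro u
      exact ⟨(hrp u).1, trivial⟩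
  set Y : ℝ → ℝ := fun t => a + ∫ u in (0:ℝ)..t, Gy u with hYdef
  set Z : ℝ → ℝ := fun t => b + ∫ u in (0:ℝ)..t, Gz u with hZdef
  have hY' : ∀ t, HasDerivAt Y (Gy t) t := fun t =>
    ((hGy.integral_hasStrictDerivAt 0 t).hasDerivAt).const_add a
  have hZ' : ∀ t, HasDerivAt Z (Gz t) t := fun t =>
    ((hGz.integral_hasStrictDerivAt 0 t).hasDerivAt).const_add b
  have hYy : ∀ t ∈ Set.Icc (0:ℝ) (1 - r), Y t = y t := by
    intro t ht
    have hint : (∫ u in (0:ℝ)..t, Gy u)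
        = ∫ u in (0:ℝ)..t, μs (r + u) (y u + F (r + u) - F r) := by
      refine intervalIntegral.integral_congr ?_
      intro u hu
      rw [Set.uIcc_of_le ht.1] at hu
      have hu' : u ∈ Set.Icc (0:ℝ) (1 - r) := ⟨hu.1, le_trans hu.2 ht.2⟩
      simp only [hGydef, hp_eq u hu']
    rw [hYdef]
    show a + (∫ u in (0:ℝ)..t, Gy u) = y t
    rw [hint, hyeq t ht]
  have hZz : ∀ t ∈ Set.Icc (0:ℝ) (1 - r), Z t = z t := by
    intro t ht
    have hint : (∫ u in (0:ℝ)..t, Gz u)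
        = ∫ u in (0:ℝ)..t, μs (r + u) (z u + B (r + u) - B r) := by
      refine intervalIntegral.integral_congr ?_
      intro u hu
      rw [Set.uIcc_of_le ht.1] at hu
      have hu' : u ∈ Set.Icc (0:ℝ) (1 - r) := ⟨hu.1, le_trans hu.2 ht.2⟩
      simp only [hGzdef, hp_eq u hu']
    rw [hZdef]
    show b + (∫ u in (0:ℝ)..t, Gz u) = z t
    rw [hint, hzeq t ht]
  -- Gronwall
  have hgron : ∀ t ∈ Set.Icc (0:ℝ) (1 - r),
      ‖Y t - Z t‖ ≤ gronwallBound (|a - b|) M (2 * M * D) (t - 0) := by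
    refine norm_le_gronwallBound_of_norm_deriv_right_le
      (f := fun t => Y t - Z t) (f' := fun t => Gy t - Gz t) ?_ ?_ ?_ ?_
    · exact (((continuous_iff_continuousAt.2 fun t => (hY' t).continuousAt).sub
        (continuous_iff_continuousAt.2 fun t => (hZ' t).continuousAt))).continuousOn
    · exact fun x _ => ((hY' x).sub (hZ' x)).hasDerivWithinAt
    · simp [hYdef, hZdef, Real.norm_eq_abs]
    · intro x hx
      have hx' : x ∈ Set.Icc (0:ℝ) (1 - r) := ⟨hx.1, hx.2.le⟩
      have hpx : p x = x := hp_eq x hx'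
      have hrx0 : (0:ℝ) ≤ r + x := by linarith [hx.1]
      have hrx1 : r + x ∈ Set.Icc (0:ℝ) 1 := ⟨hrx0, by linarith [hx.2.le]⟩
      have hlip := hμLip (r + x) hrx0 (y x + F (r + x) - F r) (z x + B (r + x) - B r)
      have habs : |y x + F (r + x) - F r - (z x + B (r + x) - B r)|
          ≤ |y x - z x| + 2 * D := by
        have h1 : |F (r + x) - B (r + x)| ≤ D := hDs _ hrx1
        have h2 : |F r - B r| ≤ D := hDs _ hFr
        have : y x + F (r + x) - F r - (z x + B (r + x) - B r)
            = (y x - z x) + ((F (r + x) - B (r + x)) - (F r - B r)) := by ring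
        rw [this]
        calc |(y x - z x) + ((F (r + x) - B (r + x)) - (F r - B r))|
            ≤ |y x - z x| + |(F (r + x) - B (r + x)) - (F r - B r)| := abs_add_le _ _
          _ ≤ |y x - z x| + (|F (r + x) - B (r + x)| + |F r - B r|) := by
              linarith [abs_sub (F (r + x) - B (r + x)) (F r - B r)]
          _ ≤ |y x - z x| + 2 * D := by linarith
      have hfx : Y x - Z x = y x - z x := by rw [hYy x hx', hZz x hx']
      simp only [Real.norm_eq_abs, hGydef, hGzdef, hpx, hfx]
      calc |μs (r + x) (y x + F (r + x) - F r) - μs (r + x) (z x + B (r + x) - B r)|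
          ≤ M * |y x + F (r + x) - F r - (z x + B (r + x) - B r)| := hlip
        _ ≤ M * (|y x - z x| + 2 * D) :=
            mul_le_mul_of_nonneg_left habs hM.le
        _ = M * |y x - z x| + 2 * M * D := by ring
  -- conclusion
  intro t ht
  have hg := hgron t ht
  rw [hYy t ht, hZz t ht, Real.norm_eq_abs, sub_zero,
    gronwallBound_of_K_ne_0 hM.ne'] at hg
  have hg2 : |y t - z t| ≤ |a - b| * Real.exp (M * t)
      + 2 * M * D / M * (Real.exp (M * t) - 1) := hg
  have hεK : 2 * M * D / M = 2 * D := by field_simp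
  rw [hεK] at hg2
  have ht1 : t ≤ 1 := le_trans ht.2 (by linarith)
  have hMt : M * t ≤ M := by nlinarith [ht.1]
  have he : Real.exp (M * t) ≤ Real.exp M := Real.exp_le_exp.2 hMt
  have hepos : (0:ℝ) < Real.exp (M * t) := Real.exp_pos _
  have heq1 : Real.exp (-(M * t)) * Real.exp (M * t) = 1 := by
    rw [← Real.exp_add]; simp
  have hee : Real.exp (M * t) - 1 ≤ M * t * Real.exp (M * t) := by
    nlinarith [Real.add_one_le_exp (-(M * t))]
  have hee2 : M * t * Real.exp (M * t) ≤ M * Real.exp M :=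
    mul_le_mul hMt he hepos.le hM.le
  have hab : 0 ≤ |a - b| := abs_nonneg _
  have hmax1 : (1:ℝ) ≤ max (2 * M) 1 := le_max_right _ _
  have hmax2 : 2 * M ≤ max (2 * M) 1 := le_max_left _ _
  have hexpM : (0:ℝ) < Real.exp M := Real.exp_pos _
  nlinarith [hg2, mul_le_mul_of_nonneg_left he hab,
    mul_le_mul_of_nonneg_left hee hD0,
    mul_le_mul_of_nonneg_left hee2 hD0,
    mul_le_mul_of_nonneg_right hmax2 (mul_nonneg hexpM.le hD0),
    mul_le_mul_of_nonneg_right hmax1 (mul_nonneg hexpM.le hab)]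
end

section
/- Let (Ω, 𝓕, ℙ) be a probability space, N : Ω → ℕ a random variable, and for each λ > 0 let D_λ, R_λ : Ω → [0,∞) be random variables. Let K₂ > 0 and K₃ > 1 be constants such that R_λ ≤ K₂ K₃^N D_λ almost surely for every λ > 0. Suppose there exists γ₀ > 0 such that ℙ(N > n)·e^{n(log n − γ₀)} → 0 as n → ∞ (over natural numbers n). Let δ : (0,∞) → (0,∞), and suppose that for every q > 0 there exists α = α(q) > 0 such that λ^q·ℙ(D_λ ≥ α δ(λ)) → 0 as λ → ∞. Then for every q > 0 there exists β = β(q) > 0 such that for every ε > 0: λ^q·ℙ(R_λ ≥ β δ(λ) λ^ε) → 0 as λ → ∞. -/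
open Filter MeasureTheory

/-- Auxiliary: `(m+1)*C - m*(log m - γ₀) → -∞`. -/
lemma aux_g_atBot (C γ₀ : ℝ) :
    Tendsto (fun m : ℕ => ((m : ℝ) + 1) * C - (m : ℝ) * (Real.log m - γ₀))
      atTop atBot := by
  have hbound : Tendsto (fun m : ℕ => -(m : ℝ) + C) atTop atBot := by
    have h1 : Tendsto (fun m : ℕ => -(m : ℝ)) atTop atBot :=
      tendsto_neg_atBot_iff.mpr (tendsto_natCast_atTop_atTop (R := ℝ))
    exact tendsto_atBot_add_const_right _ C h1
  refine tendsto_atBot_mono' atTop ?_ hbound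
  have hlog : ∀ᶠ m : ℕ in atTop, C + γ₀ + 1 ≤ Real.log m :=
    (Real.tendsto_log_atTop.comp (tendsto_natCast_atTop_atTop (R := ℝ))).eventually_ge_atTop _
  filter_upwards [hlog, eventually_ge_atTop 0] with m hm _
  have hm0 : (0 : ℝ) ≤ m := Nat.cast_nonneg m
  nlinarith [hm]

/-- Theorem 4.3, probabilistic core: if `R_λ ≤ K₂K₃^N D_λ` a.s.,
the number of switches `N` has tail `ℙ(N > n) = o(e^{−n(log n − γ₀)})`, and
`ℙ(D_λ ≥ α δ(λ)) = o(λ^{−q})`, then for every `q > 0` there is `β > 0` such that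
for every `ε > 0`, `ℙ(R_λ ≥ β δ(λ) λ^ε) = o(λ^{−q})`. -/
theorem rate_transfer_through_regime_switches
    {Ω : Type*} [MeasurableSpace Ω] (P : MeasureTheory.Measure Ω)
    [MeasureTheory.IsProbabilityMeasure P]
    (N : Ω → ℕ) (D R : ℝ → Ω → ℝ) (K₂ K₃ γ₀ : ℝ)
    (hK₂ : 0 < K₂) (hK₃ : 1 < K₃) (hγ₀ : 0 < γ₀)
    (hDnn : ∀ l, 0 < l → ∀ ω, 0 ≤ D l ω)
    (hRnn : ∀ l, 0 < l → ∀ ω, 0 ≤ R l ω)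
    (hdom : ∀ l, 0 < l → ∀ᵐ ω ∂P, R l ω ≤ K₂ * K₃ ^ (N ω) * D l ω)
    (htail : Filter.Tendsto
      (fun n : ℕ => (P {ω | n < N ω}).toReal *
        Real.exp ((n : ℝ) * (Real.log (n : ℝ) - γ₀)))
      Filter.atTop (nhds 0))
    (δ : ℝ → ℝ) (hδpos : ∀ l, 0 < l → 0 < δ l)
    (hD : ∀ q : ℝ, 0 < q → ∃ α > 0, Filter.Tendsto
      (fun l : ℝ => l ^ q * (P {ω | α * δ l ≤ D l ω}).toReal)
      Filter.atTop (nhds 0)) :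
    ∀ q : ℝ, 0 < q → ∃ β > 0, ∀ ε : ℝ, 0 < ε → Filter.Tendsto
      (fun l : ℝ => l ^ q * (P {ω | β * δ l * l ^ ε ≤ R l ω}).toReal)
      Filter.atTop (nhds 0) := by
  intro q hq
  obtain ⟨α, hα, hDα⟩ := hD q hq
  refine ⟨K₂ * α, by positivity, ?_⟩
  intro ε hε
  set c : ℝ := Real.log K₃ with hc
  have hcpos : 0 < c := Real.log_pos hK₃
  set n : ℝ → ℕ := fun l => ⌊ε * Real.log l / c⌋₊ with hn
  -- n l → ∞
  have hnat : Tendsto n atTop atTop := by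
    apply tendsto_nat_floor_atTop.comp
    exact Tendsto.atTop_div_const hcpos
      (Real.tendsto_log_atTop.const_mul_atTop hε)
  -- key measure bound for l ≥ 1
  have key : ∀ l : ℝ, 1 ≤ l →
      (P {ω | K₂ * α * δ l * l ^ ε ≤ R l ω}).toReal ≤
        (P {ω | α * δ l ≤ D l ω}).toReal + (P {ω | n l < N ω}).toReal := by
    intro l hl
    have hl0 : (0 : ℝ) < l := lt_of_lt_of_le one_pos hl
    have hlog0 : 0 ≤ Real.log l := Real.log_nonneg hl
    have hKn : (K₃ : ℝ) ^ (n l) ≤ l ^ ε := by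
      have h1 : (n l : ℝ) ≤ ε * Real.log l / c :=
        Nat.floor_le (by positivity)
      have h2 : (n l : ℝ) * c ≤ ε * Real.log l := by
        rw [← div_mul_cancel₀ (ε * Real.log l) (ne_of_gt hcpos)]
        exact mul_le_mul_of_nonneg_right h1 hcpos.le
      have e1 : (K₃ : ℝ) ^ (n l) = Real.exp ((n l : ℝ) * c) := by
        rw [hc, mul_comm, Real.exp_mul, Real.exp_log (lt_trans one_pos hK₃),
          ← Real.rpow_natCast]
      have e2 : l ^ ε = Real.exp (ε * Real.log l) := by
        rw [Real.rpow_def_of_pos hl0, mul_comm]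
      rw [e1, e2]
      exact Real.exp_le_exp.mpr h2
    have hsub : {ω | K₂ * α * δ l * l ^ ε ≤ R l ω} ≤ᵐ[P]
        ({ω | α * δ l ≤ D l ω} ∪ {ω | n l < N ω} : Set Ω) := by
      filter_upwards [hdom l hl0] with ω hω
      intro hR
      by_cases hN : n l < N ω
      · exact Or.inr hN
      · left
        push_neg at hN
        have hpow : (K₃ : ℝ) ^ (N ω) ≤ K₃ ^ (n l) :=
          pow_le_pow_right₀ hK₃.le hN
        have hD0 := hDnn l hl0 ω
        have hlε : (0 : ℝ) < l ^ ε := Real.rpow_pos_of_pos hl0 ε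
        have hchain : K₂ * α * δ l * l ^ ε ≤ K₂ * (l ^ ε) * D l ω := by
          calc K₂ * α * δ l * l ^ ε ≤ R l ω := hR
            _ ≤ K₂ * K₃ ^ (N ω) * D l ω := hω
            _ ≤ K₂ * (l ^ ε) * D l ω := by
                have h5 : (K₃ : ℝ) ^ (N ω) ≤ l ^ ε := le_trans hpow hKn
                nlinarith [mul_le_mul_of_nonneg_right h5 (mul_nonneg hK₂.le hD0)]
        show α * δ l ≤ D l ω
        have hKl : (0 : ℝ) < K₂ * l ^ ε := by positivity
        nlinarith
    have h1 : P {ω | K₂ * α * δ l * l ^ ε ≤ R l ω} ≤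
        P {ω | α * δ l ≤ D l ω} + P {ω | n l < N ω} :=
      le_trans (measure_mono_ae hsub) (measure_union_le _ _)
    have h2 := ENNReal.toReal_mono
      (a := P {ω | K₂ * α * δ l * l ^ ε ≤ R l ω})
      (ENNReal.add_ne_top.mpr ⟨measure_ne_top P _, measure_ne_top P _⟩) h1
    rwa [ENNReal.toReal_add (measure_ne_top P _) (measure_ne_top P _)] at h2
  -- tail term tends to zero
  have htailterm : Tendsto
      (fun l : ℝ => l ^ q * (P {ω | n l < N ω}).toReal) atTop (nhds 0) := by
    have hfact : ∀ l : ℝ,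
        l ^ q * (P {ω | n l < N ω}).toReal =
          ((P {ω | n l < N ω}).toReal *
            Real.exp ((n l : ℝ) * (Real.log (n l : ℝ) - γ₀))) *
          (l ^ q * Real.exp (-((n l : ℝ) * (Real.log (n l : ℝ) - γ₀)))) := by
      intro l
      rw [Real.exp_neg]
      field_simp [Real.exp_ne_zero]
    have hA : Tendsto (fun l : ℝ => (P {ω | n l < N ω}).toReal *
        Real.exp ((n l : ℝ) * (Real.log (n l : ℝ) - γ₀))) atTop (nhds 0) :=
      htail.comp hnat
    have hB : Tendsto (fun l : ℝ =>
        l ^ q * Real.exp (-((n l : ℝ) * (Real.log (n l : ℝ) - γ₀)))) atTop (nhds 0) := by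
      -- rewrite as exp of exponent, for l ≥ 1
      have hexp : Tendsto (fun l : ℝ =>
          Real.log l * q - (n l : ℝ) * (Real.log (n l : ℝ) - γ₀)) atTop atBot := by
        have hg : Tendsto (fun m : ℕ =>
            ((m : ℝ) + 1) * (c * q / ε) - (m : ℝ) * (Real.log m - γ₀)) atTop atBot :=
          aux_g_atBot (c * q / ε) γ₀
        refine tendsto_atBot_mono' atTop ?_ (hg.comp hnat)
        filter_upwards [eventually_ge_atTop (1 : ℝ)] with l hl
        have hl0 : (0 : ℝ) < l := lt_of_lt_of_le one_pos hl
        have hfl : ε * Real.log l / c < (n l : ℝ) + 1 := Nat.lt_floor_add_one _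
        have : ε * Real.log l < ((n l : ℝ) + 1) * c := by
          calc ε * Real.log l = (ε * Real.log l / c) * c := by
                field_simp
            _ < ((n l : ℝ) + 1) * c := by
                exact mul_lt_mul_of_pos_right hfl hcpos
        have hlogq : Real.log l * q ≤ ((n l : ℝ) + 1) * (c * q / ε) := by
          rw [div_eq_mul_inv]
          have h3 : Real.log l ≤ ((n l : ℝ) + 1) * c / ε := by
            rw [le_div_iff₀ hε]
            nlinarith
          calc Real.log l * q ≤ (((n l : ℝ) + 1) * c / ε) * q :=
                mul_le_mul_of_nonneg_right h3 hq.le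
            _ = ((n l : ℝ) + 1) * (c * q * ε⁻¹) := by ring
        simp only [Function.comp]
        linarith
      have := Real.tendsto_exp_atBot.comp hexp
      refine this.congr' ?_
      filter_upwards [eventually_ge_atTop (1 : ℝ)] with l hl
      have hl0 : (0 : ℝ) < l := lt_of_lt_of_le one_pos hl
      simp only [Function.comp]
      rw [Real.exp_sub, Real.rpow_def_of_pos hl0, Real.exp_neg]
      rw [div_eq_mul_inv]
    have := hA.mul hB
    rw [mul_zero] at this
    exact this.congr (fun l => (hfact l).symm)
  -- combine
  have hsum : Tendsto (fun l : ℝ =>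
      l ^ q * (P {ω | α * δ l ≤ D l ω}).toReal +
        l ^ q * (P {ω | n l < N ω}).toReal) atTop (nhds 0) := by
    have := hDα.add htailterm
    rwa [add_zero] at this
  refine squeeze_zero' ?_ ?_ hsum
  · filter_upwards [eventually_ge_atTop (1 : ℝ)] with l hl
    have hl0 : (0 : ℝ) < l := lt_of_lt_of_le one_pos hl
    positivity
  · filter_upwards [eventually_ge_atTop (1 : ℝ)] with l hl
    have hl0 : (0 : ℝ) < l := lt_of_lt_of_le one_pos hl
    have hrq : (0 : ℝ) ≤ l ^ q := (Real.rpow_pos_of_pos hl0 q).le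
    have := mul_le_mul_of_nonneg_left (key l hl) hrq
    rw [mul_add] at this
    exact this
end

section
/- Let c > 0 and let N : Ω → ℕ be a random variable on a probability space (Ω, 𝓕, ℙ) such that ℙ(N ≥ n) ≤ ℙ(N* ≥ n) for all n ∈ ℕ, where N* is Poisson distributed with mean c, i.e. ℙ(N* ≥ n) = e^{−c} ∑_{k=n}^∞ c^k/k!. Then ℙ(N > n)·e^{n(log n − (log c + 1))} → 0 as n → ∞. -/
open Real Filter

private lemma pow_div_factorial_le_exp_aux {x : ℝ} (hx : 0 ≤ x) (n : ℕ) :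
    x ^ n / n.factorial ≤ Real.exp x := by
  calc x ^ n / n.factorial ≤ ∑ i ∈ Finset.range (n + 1), x ^ i / i.factorial := by
        refine Finset.single_le_sum (f := fun i => x ^ i / (i.factorial : ℝ)) ?_ ?_
        · intro i _
          positivity
        · exact Finset.self_mem_range_succ n
    _ ≤ Real.exp x := Real.sum_le_exp_of_nonneg hx _

private lemma tail_sum_le {c : ℝ} (hc : 0 < c) {n : ℕ} (hn : 2 * c ≤ (n : ℝ) + 2) :
    (∑' k : ℕ, c ^ (n + 1 + k) / (((n + 1 + k).factorial : ℝ))) ≤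
      2 * (c ^ (n + 1) / ((n + 1).factorial : ℝ)) := by
  have hterm : ∀ k : ℕ, c ^ (n + 1 + k) / (((n + 1 + k).factorial : ℝ)) ≤
      (c ^ (n + 1) / ((n + 1).factorial : ℝ)) * (1 / 2) ^ k := by
    intro k
    have hfac : ((n + 1).factorial : ℝ) * ((n : ℝ) + 2) ^ k ≤ ((n + 1 + k).factorial : ℝ) := by
      have := @Nat.factorial_mul_pow_le_factorial (n + 1) k
      calc ((n + 1).factorial : ℝ) * ((n : ℝ) + 2) ^ k
          = (((n + 1).factorial * (n + 1 + 1) ^ k : ℕ) : ℝ) := by push_cast; ring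
        _ ≤ ((n + 1 + k).factorial : ℝ) := by exact_mod_cast this
    have h1 : c ^ (n + 1 + k) / (((n + 1 + k).factorial : ℝ)) ≤
        c ^ (n + 1 + k) / (((n + 1).factorial : ℝ) * ((n : ℝ) + 2) ^ k) := by
      apply div_le_div_of_nonneg_left (by positivity) (by positivity) hfac
    refine h1.trans ?_
    rw [pow_add]
    rw [div_le_iff₀ (by positivity)] at *
    have hck : c ^ k ≤ (((n : ℝ) + 2) / 2) ^ k := by
      apply pow_le_pow_left₀ hc.le
      linarith
    calc c ^ (n + 1) * c ^ k ≤ c ^ (n + 1) * (((n : ℝ) + 2) / 2) ^ k := by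
          apply mul_le_mul_of_nonneg_left hck (by positivity)
      _ = c ^ (n + 1) / ((n + 1).factorial : ℝ) * (1 / 2) ^ k *
            (((n + 1).factorial : ℝ) * ((n : ℝ) + 2) ^ k) := by
          field_simp
          ring_nf; rw [← mul_pow]; congr 1; ring
  have hsum2 : Summable (fun k : ℕ => (c ^ (n + 1) / ((n + 1).factorial : ℝ)) * (1 / 2) ^ k) :=
    (summable_geometric_of_lt_one (by norm_num) (by norm_num)).mul_left _
  have hsum1 : Summable (fun k : ℕ => c ^ (n + 1 + k) / (((n + 1 + k).factorial : ℝ))) := by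
    refine Summable.of_nonneg_of_le (fun k => by positivity) hterm hsum2
  calc (∑' k : ℕ, c ^ (n + 1 + k) / (((n + 1 + k).factorial : ℝ)))
      ≤ ∑' k : ℕ, (c ^ (n + 1) / ((n + 1).factorial : ℝ)) * (1 / 2) ^ k :=
        Summable.tsum_le_tsum hterm hsum1 hsum2
    _ = (c ^ (n + 1) / ((n + 1).factorial : ℝ)) * (1 - 1 / 2)⁻¹ := by
        rw [tsum_mul_left, tsum_geometric_of_lt_one (by norm_num) (by norm_num)]
    _ = 2 * (c ^ (n + 1) / ((n + 1).factorial : ℝ)) := by norm_num; ring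

/-- Lemma 4.4: if `N` is stochastically dominated by a Poisson(c)
random variable, then `ℙ(N > n) = o(e^{−n(log n − (log c + 1))})`. -/
theorem poisson_domination_tail
    {Ω : Type*} [MeasurableSpace Ω] (P : MeasureTheory.Measure Ω)
    [MeasureTheory.IsProbabilityMeasure P]
    (c : ℝ) (hc : 0 < c) (N : Ω → ℕ)
    (hdom : ∀ n : ℕ, (P {ω | n ≤ N ω}).toReal ≤
      Real.exp (-c) * ∑' k : ℕ, c ^ (n + k) / ((n + k).factorial : ℝ)) :
    Filter.Tendsto
      (fun n : ℕ => (P {ω | n < N ω}).toReal *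
        Real.exp ((n : ℝ) * (Real.log (n : ℝ) - (Real.log c + 1))))
      Filter.atTop (nhds 0) := by
  have hK : Tendsto (fun n : ℕ => (2 * c * Real.exp (-c)) * (1 / ((n : ℝ) + 1)))
      atTop (nhds 0) := by
    have := tendsto_one_div_add_atTop_nhds_zero_nat.const_mul (2 * c * Real.exp (-c))
    simpa using this
  refine squeeze_zero' ?_ ?_ hK
  · filter_upwards with n
    positivity
  · obtain ⟨m, hm⟩ := exists_nat_ge (2 * c)
    filter_upwards [eventually_ge_atTop (max 1 m)] with n hn
    have hn1 : 1 ≤ n := le_trans (le_max_left 1 m) hn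
    have hnm : (m : ℝ) ≤ n := by exact_mod_cast le_trans (le_max_right 1 m) hn
    have hnc : 2 * c ≤ (n : ℝ) + 2 := by linarith
    have hnpos : (0 : ℝ) < n := by exact_mod_cast hn1
    -- rewrite the exponential
    have hE : Real.exp ((n : ℝ) * (Real.log (n : ℝ) - (Real.log c + 1))) =
        (n : ℝ) ^ n / (c ^ n * Real.exp n) := by
      rw [show (n : ℝ) * (Real.log (n : ℝ) - (Real.log c + 1)) =
        (n : ℝ) * Real.log (n : ℝ) - ((n : ℝ) * Real.log c + n) by ring,
        Real.exp_sub, Real.exp_add, Real.exp_nat_mul, Real.exp_nat_mul,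
        Real.exp_log hnpos, Real.exp_log hc]
    -- probability bound
    have hp : (P {ω | n < N ω}).toReal ≤
        Real.exp (-c) * (2 * (c ^ (n + 1) / ((n + 1).factorial : ℝ))) := by
      have h1 : (P {ω | n < N ω}).toReal ≤
          Real.exp (-c) * ∑' k : ℕ, c ^ (n + 1 + k) / ((n + 1 + k).factorial : ℝ) := by
        have := hdom (n + 1)
        exact this
      refine h1.trans ?_
      exact mul_le_mul_of_nonneg_left (tail_sum_le hc hnc) (Real.exp_nonneg _)
    rw [hE]
    have hEnn : (0:ℝ) ≤ (n : ℝ) ^ n / (c ^ n * Real.exp n) := by positivity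
    calc (P {ω | n < N ω}).toReal * ((n : ℝ) ^ n / (c ^ n * Real.exp n))
        ≤ (Real.exp (-c) * (2 * (c ^ (n + 1) / ((n + 1).factorial : ℝ)))) *
            ((n : ℝ) ^ n / (c ^ n * Real.exp n)) :=
          mul_le_mul_of_nonneg_right hp hEnn
      _ = (2 * c * Real.exp (-c)) * (1 / ((n : ℝ) + 1)) *
            ((n : ℝ) ^ n / (Real.exp n * (n.factorial : ℝ))) := by
          have hfs : ((n + 1).factorial : ℝ) = ((n : ℝ) + 1) * (n.factorial : ℝ) := by
            rw [Nat.factorial_succ]; push_cast; ring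
          rw [hfs, pow_succ]
          have h1 : (0:ℝ) < (n.factorial : ℝ) := by positivity
          field_simp
      _ ≤ (2 * c * Real.exp (-c)) * (1 / ((n : ℝ) + 1)) * 1 := by
          apply mul_le_mul_of_nonneg_left _ (by positivity)
          rw [div_le_one (by positivity)]
          have := pow_div_factorial_le_exp_aux (le_of_lt hnpos) n
          rw [div_le_iff₀ (by positivity)] at this
          linarith [this]
      _ = (2 * c * Real.exp (-c)) * (1 / ((n : ℝ) + 1)) := by ring
end

section
/- Let q > 0 and γ₀ > 0, and let A : (0,∞) → ℝ be a function such that for all sufficiently large λ: A(λ) ≥ e^{γ₀} and A(λ)(log A(λ) − γ₀) = q log λ. Then A(λ)·log(q e^{−γ₀} log λ)/(q log λ) → 1 as λ → ∞; in particular A(λ) → ∞. -/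
open Real Filter

/-- eqn:minilim: if `A(λ) ≥ e^{γ₀}` and
`A(λ)(log A(λ) − γ₀) = q log λ` for all large `λ`, then
`A(λ)·log(q e^{−γ₀} log λ)/(q log λ) → 1`; in particular `A(λ) → ∞`. -/
theorem inverse_growth_asymptotics
    (q γ₀ : ℝ) (hq : 0 < q) (hγ₀ : 0 < γ₀)
    (A : ℝ → ℝ)
    (hA : ∃ Λ : ℝ, ∀ l, Λ ≤ l →
      Real.exp γ₀ ≤ A l ∧ A l * (Real.log (A l) - γ₀) = q * Real.log l) :
    Filter.Tendsto
      (fun l : ℝ => A l * Real.log (q * Real.exp (-γ₀) * Real.log l) / (q * Real.log l))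
      Filter.atTop (nhds 1) ∧
    Filter.Tendsto A Filter.atTop Filter.atTop := by
  obtain ⟨Λ, hΛ⟩ := hA
  have hqlog : Tendsto (fun l : ℝ => q * Real.log l) atTop atTop :=
    Real.tendsto_log_atTop.const_mul_atTop hq
  -- A tends to atTop
  have hAtop : Tendsto A atTop atTop := by
    rw [tendsto_atTop]
    intro M
    set C : ℝ := max M 1 with hC
    have hC1 : 1 ≤ C := le_max_right _ _
    filter_upwards [eventually_ge_atTop Λ, hqlog.eventually_gt_atTop (C * Real.log C)]
      with l hl hql
    obtain ⟨h₁, h₂⟩ := hΛ l hl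
    have hApos : (1 : ℝ) < A l := lt_of_lt_of_le (Real.exp_zero ▸ Real.exp_lt_exp.2 hγ₀) h₁
    by_contra hcon
    push_neg at hcon
    have hAC : A l < C := lt_of_lt_of_le hcon (le_max_left _ _)
    have hlogA : 0 ≤ Real.log (A l) := Real.log_nonneg hApos.le
    have hlogAC : Real.log (A l) ≤ Real.log C := Real.log_le_log (by linarith) hAC.le
    nlinarith [h₂, hγ₀, hApos]
  -- log (A l) - γ₀ tends to atTop
  have hlogAtop : Tendsto (fun l => Real.log (A l) - γ₀) atTop atTop := by
    simpa [sub_eq_add_neg] using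
      tendsto_atTop_add_const_right atTop (-γ₀) (Real.tendsto_log_atTop.comp hAtop)
  constructor
  · -- main limit
    have hdiv : Tendsto (fun v : ℝ => Real.log v / v) atTop (nhds 0) := by
      simpa using Real.isLittleO_log_id_atTop.tendsto_div_nhds_zero
    have hlim : Tendsto
        (fun l => 1 + Real.log (Real.log (A l) - γ₀) / (Real.log (A l) - γ₀))
        atTop (nhds 1) := by
      have := (tendsto_const_nhds : Tendsto (fun _ : ℝ => (1:ℝ)) atTop (nhds 1)).add
        (hdiv.comp hlogAtop)
      simpa using this
    refine Filter.Tendsto.congr' ?_ hlim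
    filter_upwards [eventually_ge_atTop Λ, eventually_gt_atTop 1] with l hl hl1
    obtain ⟨h₁, h₂⟩ := hΛ l hl
    have hApos : 0 < A l := lt_of_lt_of_le (Real.exp_pos _) h₁
    have hlogl : 0 < Real.log l := Real.log_pos hl1
    have ht : 0 < q * Real.log l := by positivity
    have hv : 0 < Real.log (A l) - γ₀ := by nlinarith
    have key : q * Real.exp (-γ₀) * Real.log l
        = Real.exp (-γ₀) * (A l * (Real.log (A l) - γ₀)) := by rw [h₂]; ring
    rw [key, Real.log_mul (Real.exp_ne_zero _) (by positivity), Real.log_exp,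
      Real.log_mul hApos.ne' hv.ne']
    field_simp
    linear_combination (-(Real.log (A l) - γ₀ + Real.log (Real.log (A l) - γ₀))) * h₂
  · exact hAtop
end

section
/- Let q > 0, γ₀ > 0, K₃ > 1 and ε > 0, and let A : (0,∞) → ℝ be a function such that for all sufficiently large λ: A(λ) ≥ e^{γ₀} and A(λ)(log A(λ) − γ₀) = q log λ. Then K₃^{A(λ)}·λ^{−ε} → 0 as λ → ∞. -/
/-- if `A(λ) ≥ e^{γ₀}` and `A(λ)(log A(λ) − γ₀) = q log λ` for all
large `λ`, then `K₃^{A(λ)} λ^{−ε} → 0` for every `K₃ > 1` and `ε > 0`. -/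
theorem geometric_factor_beaten_by_power
    (q γ₀ K₃ ε : ℝ) (hq : 0 < q) (hγ₀ : 0 < γ₀) (hK₃ : 1 < K₃) (hε : 0 < ε)
    (A : ℝ → ℝ)
    (hA : ∃ Λ : ℝ, ∀ l, Λ ≤ l →
      Real.exp γ₀ ≤ A l ∧ A l * (Real.log (A l) - γ₀) = q * Real.log l) :
    Filter.Tendsto (fun l : ℝ => K₃ ^ (A l) * l ^ (-ε)) Filter.atTop (nhds 0) := by
  obtain ⟨Λ, hΛ⟩ := hA
  have hK₃0 : (0:ℝ) < K₃ := lt_trans one_pos hK₃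
  -- A tends to atTop
  have hqlog : Filter.Tendsto (fun l => q * Real.log l) Filter.atTop Filter.atTop :=
    Real.tendsto_log_atTop.const_mul_atTop hq
  have hAtop : Filter.Tendsto A Filter.atTop Filter.atTop := by
    rw [Filter.tendsto_atTop]
    intro b
    filter_upwards [hqlog.eventually_ge_atTop (b^2), Filter.eventually_ge_atTop Λ]
      with l hbl hl
    obtain ⟨h1, h2⟩ := hΛ l hl
    have hApos : 0 < A l := lt_of_lt_of_le (Real.exp_pos γ₀) h1
    have hlog : Real.log (A l) ≤ A l - 1 := Real.log_le_sub_one_of_pos hApos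
    nlinarith [hγ₀.le, sq_nonneg (A l - b), sq_nonneg (A l + b)]
  have hlogA : Filter.Tendsto (fun l => Real.log (A l)) Filter.atTop Filter.atTop :=
    Real.tendsto_log_atTop.comp hAtop
  have hinner : Filter.Tendsto
      (fun l => A l * (Real.log K₃ - ε/q * (Real.log (A l) - γ₀)))
      Filter.atTop Filter.atBot := by
    apply Filter.Tendsto.atTop_mul_atBot₀ hAtop
    have hg : Filter.Tendsto (fun l => ε/q * (Real.log (A l) - γ₀))
        Filter.atTop Filter.atTop :=
      (hlogA.atTop_add tendsto_const_nhds).const_mul_atTop (div_pos hε hq)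
    simpa [sub_eq_add_neg] using
      Filter.tendsto_atBot_add_const_left Filter.atTop (Real.log K₃)
        (Filter.tendsto_neg_atTop_atBot.comp hg)
  have heq : ∀ᶠ l in Filter.atTop,
      K₃ ^ (A l) * l ^ (-ε)
        = Real.exp (A l * (Real.log K₃ - ε/q * (Real.log (A l) - γ₀))) := by
    filter_upwards [Filter.eventually_ge_atTop Λ, Filter.eventually_gt_atTop (0:ℝ)]
      with l hl hl0
    obtain ⟨h1, h2⟩ := hΛ l hl
    rw [Real.rpow_def_of_pos hK₃0, Real.rpow_def_of_pos hl0, ← Real.exp_add]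
    congr 1
    have hlogl : Real.log l = A l * (Real.log (A l) - γ₀) / q := by
      field_simp
      linarith [h2]
    rw [hlogl]
    field_simp
    ring
  rw [Filter.tendsto_congr' heq]
  exact Real.tendsto_exp_atBot.comp hinner
end
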